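/- arXiv:2603.05047 — 12 statements merged into one kernel-verified Lean document; each statement's English description precedes it below -/
import Mathlib

section
/- Let f be analytic on the open unit disk 𝔻 = {z ∈ ℂ : |z| < 1} with a simple pole at the boundary point 1, i.e. there exist an open set U ⊆ ℂ containing 1 and an analytic function h on U with h(1) ≠ 0 such that f(z) = h(z)/(z − 1) for all z ∈ 𝔻 ∩ U, and suppose f'(0) = 1. Then the radius of the largest schlicht disk in f(𝔻) is infinite: for every R > 0 there exist a point a ∈ ℂ and an open set V ⊆ 𝔻 such that f is injective on V and f(V) = {w ∈ ℂ : |w − a| < R}. -/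
open Complex Metric Set

lemma aux_inj {F : ℂ → ℂ} {c : ℂ} {s : Set ℂ} {c' : ℝ}
    (hc : 0 < ‖c‖) (hc' : c' ≤ ‖c‖ / 2)
    (hAL : ∀ x ∈ s, ∀ y ∈ s, ‖F x - F y - c * (x - y)‖ ≤ c' * ‖x - y‖) :
    Set.InjOn F s := by
  intro x hx y hy hxy
  have h1 := hAL x hx y hy
  rw [hxy] at h1
  simp only [sub_self, zero_sub, norm_neg] at h1
  rw [norm_mul] at h1
  have h2 : c' * ‖x - y‖ ≤ ‖c‖ / 2 * ‖x - y‖ :=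
    mul_le_mul_of_nonneg_right hc' (norm_nonneg _)
  have h3 : ‖x - y‖ ≤ 0 := by nlinarith [norm_nonneg (x - y)]
  have h4 := norm_nonneg (x - y)
  have h5 : ‖x - y‖ = 0 := le_antisymm h3 h4
  exact sub_eq_zero.mp (norm_eq_zero.mp h5)

lemma aux_geo {δ ρ S : ℝ} (hδ : 0 < δ) (hρ : 1 ≤ ρ) (hSeq : S = 4*ρ+4/δ+2) {w : ℂ}
    (hw : w ∈ Metric.ball (-((S : ℝ) : ℂ)) (4*ρ)) :
    w ≠ 0 ∧ ‖w⁻¹‖ < δ/2 ∧ (1 + w⁻¹) ∈ Metric.ball (0:ℂ) 1 := by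
  have hSpos : 0 < S := by rw [hSeq]; positivity
  have hdist : ‖w + (S:ℂ)‖ < 4*ρ := by
    have := mem_ball.mp hw
    rwa [dist_eq_norm, sub_neg_eq_add] at this
  have hnormS : ‖((S:ℝ):ℂ)‖ = S := by
    rw [Complex.norm_real, Real.norm_eq_abs, abs_of_pos hSpos]
  have hnw : 4/δ + 2 < ‖w‖ := by
    have h1 : ‖((S:ℝ):ℂ)‖ - ‖w + (S:ℂ)‖ ≤ ‖((S:ℝ):ℂ) - (w + (S:ℂ))‖ := norm_sub_norm_le _ _
    have h2 : ((S:ℝ):ℂ) - (w + (S:ℂ)) = -w := by ring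
    rw [h2, norm_neg, hnormS] at h1
    have h3 : S - 4*ρ = 4/δ + 2 := by rw [hSeq]; ring
    linarith
  have hwpos : 0 < ‖w‖ := by
    have : (0:ℝ) < 4/δ + 2 := by positivity
    linarith
  have hw0 : w ≠ 0 := norm_pos_iff.mp hwpos
  have hre : w.re < -(1/2) := by
    have h1 : (w + (S:ℂ)).re ≤ ‖w + (S:ℂ)‖ := by
      exact Complex.re_le_norm _
    have h2 : (w + (S:ℂ)).re = w.re + S := by simp
    have h4 : (0:ℝ) < 4/δ := by positivity
    rw [h2] at h1
    have h5 : w.re < 4*ρ - S := by linarith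
    rw [hSeq] at h5
    linarith
  have hinv : ‖w⁻¹‖ < δ/2 := by
    rw [norm_inv]
    have h4δ : (0:ℝ) < 4/δ := by positivity
    have he : (4/δ)⁻¹ = δ/4 := by field_simp
    calc ‖w‖⁻¹ < (4/δ)⁻¹ := by
          apply inv_strictAnti₀ h4δ; linarith
      _ = δ/4 := he
      _ < δ/2 := by linarith
  refine ⟨hw0, hinv, ?_⟩
  have hlt : ‖w + 1‖ < ‖w‖ := by
    have h1 : Complex.normSq (w + 1) < Complex.normSq w := by
      simp only [Complex.normSq_apply, Complex.add_re, Complex.add_im, Complex.one_re,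
        Complex.one_im]
      nlinarith
    rw [Complex.norm_def, Complex.norm_def]
    exact Real.sqrt_lt_sqrt (Complex.normSq_nonneg _) h1
  have heq : (1 : ℂ) + w⁻¹ = (w + 1) * w⁻¹ := by field_simp
  rw [mem_ball, dist_zero_right, heq, norm_mul, norm_inv]
  rw [mul_inv_lt_iff₀' hwpos]
  linarith

/-- Bloch part of Theorem 2.1: if `f` is analytic on the unit disk with a simple pole at
the boundary point `1` and `f'(0) = 1`, then `f(𝔻)` contains schlicht disks of every radius. -/
theorem schlicht_disks_unbounded_of_boundary_pole_at_one
    (f : ℂ → ℂ) (hf : AnalyticOnNhd ℂ f (Metric.ball (0:ℂ) 1))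
    (U : Set ℂ) (hU : IsOpen U) (h1U : (1:ℂ) ∈ U)
    (h : ℂ → ℂ) (hh : AnalyticOnNhd ℂ h U) (hh1 : h 1 ≠ 0)
    (hfh : ∀ z ∈ Metric.ball (0:ℂ) 1 ∩ U, f z = h z / (z - 1))
    (hf0 : deriv f 0 = 1) :
    ∀ R > 0, ∃ (a : ℂ) (V : Set ℂ), IsOpen V ∧ V ⊆ Metric.ball (0:ℂ) 1 ∧
      Set.InjOn f V ∧ f '' V = Metric.ball a R := by
  intro R hR
  obtain ⟨δ, hδ, hδU⟩ : ∃ δ > 0, Metric.ball (1:ℂ) δ ⊆ U := Metric.isOpen_iff.mp hU 1 h1U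
  have hg : DifferentiableOn ℂ (dslope h 1) U :=
    (Complex.differentiableOn_dslope (hU.mem_nhds h1U)).mpr hh.differentiableOn
  have hKU : Metric.closedBall (1:ℂ) (δ/2) ⊆ U := fun z hz => hδU (by
    rw [mem_closedBall] at hz; rw [mem_ball]; linarith)
  obtain ⟨M0, hM0⟩ := (isCompact_closedBall (1:ℂ) (δ/2)).exists_bound_of_continuousOn
    (hg.continuousOn.mono hKU)
  set M : ℝ := max M0 0 with hMdef
  have hMnn : 0 ≤ M := le_max_right _ _
  have hM : ∀ z ∈ Metric.closedBall (1:ℂ) (δ/2), ‖dslope h 1 z‖ ≤ M :=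
    fun z hz => (hM0 z hz).trans (le_max_left _ _)
  have hcn : 0 < ‖h 1‖ := norm_pos_iff.mpr hh1
  set cn : ℝ := ‖h 1‖ with hcndef
  set ρ : ℝ := max (max (4*R/cn) ((2*M+1)/cn)) 1 with hρdef
  have hρ1 : 1 ≤ ρ := le_max_right _ _
  have hρpos : 0 < ρ := lt_of_lt_of_le one_pos hρ1
  have hρR : 4*R/cn ≤ ρ := le_trans (le_max_left _ _) (le_max_left _ _)
  have hρM : (2*M+1)/cn ≤ ρ := le_trans (le_max_right _ _) (le_max_left _ _)
  set S : ℝ := 4*ρ+4/δ+2 with hSdef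
  set w₀ : ℂ := -((S : ℝ) : ℂ) with hw₀def
  set G : ℂ → ℂ := fun w => dslope h 1 (1 + w⁻¹) with hGdef
  set F : ℂ → ℂ := fun w => h 1 * w + G w with hFdef
  have hgeo : ∀ w ∈ Metric.ball w₀ (4*ρ), w ≠ 0 ∧ ‖w⁻¹‖ < δ/2 ∧
      (1 + w⁻¹) ∈ Metric.ball (0:ℂ) 1 := fun w hw => aux_geo hδ hρ1 hSdef hw
  have hmapsU : ∀ w ∈ Metric.ball w₀ (4*ρ), (1 + w⁻¹) ∈ Metric.closedBall (1:ℂ) (δ/2) := by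
    intro w hw
    obtain ⟨hw0, hinv, -⟩ := hgeo w hw
    rw [mem_closedBall]
    have : dist (1 + w⁻¹) 1 = ‖w⁻¹‖ := by rw [dist_eq_norm]; ring_nf
    rw [this]; linarith
  have hGdiff : DifferentiableOn ℂ G (Metric.ball w₀ (4*ρ)) := by
    apply DifferentiableOn.comp (t := U) hg
    · intro w hw
      exact (((differentiableAt_id.inv (hgeo w hw).1).const_add 1)).differentiableWithinAt
    · exact fun w hw => hKU (hmapsU w hw)
  have hGbd : ∀ w ∈ Metric.ball w₀ (4*ρ), ‖G w‖ ≤ M := fun w hw => hM _ (hmapsU w hw)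
  -- Lipschitz estimate
  have hLip : ∀ x ∈ Metric.closedBall w₀ ρ, ∀ y ∈ Metric.closedBall w₀ ρ,
      ‖F x - F y - h 1 * (x - y)‖ ≤ (2*M+1)/(3*ρ) * ‖x - y‖ := by
    intro x hx y hy
    rw [mem_closedBall] at hx hy
    have hsub : Metric.ball y (3*ρ) ⊆ Metric.ball w₀ (4*ρ) := by
      intro w hw
      rw [mem_ball] at hw ⊢
      calc dist w w₀ ≤ dist w y + dist y w₀ := dist_triangle _ _ _
        _ < 3*ρ + ρ := by linarith
        _ = 4*ρ := by ring
    have hy4 : y ∈ Metric.ball y (3*ρ) := by rw [mem_ball, dist_self]; linarith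
    have hmaps : Set.MapsTo G (Metric.ball y (3*ρ)) (Metric.ball (G y) (2*M+1)) := by
      intro w hw
      rw [mem_ball]
      calc dist (G w) (G y) ≤ ‖G w‖ + ‖G y‖ := dist_le_norm_add_norm _ _
        _ ≤ M + M := add_le_add (hGbd w (hsub hw)) (hGbd y (hsub hy4))
        _ < 2*M+1 := by linarith
    have hz : x ∈ Metric.ball y (3*ρ) := by
      rw [mem_ball]
      calc dist x y ≤ dist x w₀ + dist w₀ y := dist_triangle _ _ _
        _ ≤ ρ + ρ := by rw [dist_comm w₀ y]; exact add_le_add hx hy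
        _ < 3*ρ := by linarith
    have key := Complex.dist_le_div_mul_dist_of_mapsTo_ball (hGdiff.mono hsub)
      (hmaps.mono_right Metric.ball_subset_closedBall) hz
    have heq : F x - F y - h 1 * (x - y) = G x - G y := by
      simp only [hFdef]; ring
    rw [heq, ← dist_eq_norm, ← dist_eq_norm]
    exact key
  have hc'le : (2*M+1)/(3*ρ) ≤ cn/2 := by
    rw [div_le_iff₀ (by positivity)] at hρM ⊢
    nlinarith
  -- approximates linear on
  set f' : ℂ →L[ℂ] ℂ := h 1 • ContinuousLinearMap.id ℂ ℂ with hf'def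
  have hf'app : ∀ w : ℂ, f' w = h 1 * w := by
    intro w; simp [hf'def]
  set c' : NNReal := Real.toNNReal ((2*M+1)/(3*ρ)) with hc'def
  have hc'coe : (c' : ℝ) = (2*M+1)/(3*ρ) := Real.coe_toNNReal _ (by positivity)
  have hAL : ApproximatesLinearOn F f' (Metric.closedBall w₀ ρ) c' := by
    intro x hx y hy
    have := hLip x hx y hy
    rw [hf'app, hc'coe]
    convert this using 3
  set nri : f'.NonlinearRightInverse :=
    { toFun := fun y => (h 1)⁻¹ * y
      nnnorm := ‖(h 1)⁻¹‖₊
      bound' := fun y => by rw [norm_mul, coe_nnnorm]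
      right_inv' := fun y => by
        rw [hf'app]; field_simp } with hnridef
  have hnn : ((nri.nnnorm : ℝ))⁻¹ = cn := by
    rw [hnridef]
    simp only [coe_nnnorm, norm_inv, inv_inv, hcndef]
  have hsurj := hAL.surjOn_closedBall_of_nonlinearRightInverse nri (b := w₀) (ε := ρ/2)
    (by positivity) (Metric.closedBall_subset_closedBall (by linarith))
  have hrad : R ≤ ((nri.nnnorm : ℝ)⁻¹ - c') * (ρ/2) := by
    rw [hnn, hc'coe]
    rw [div_le_iff₀ hcn] at hρR
    nlinarith
  have hFinj : Set.InjOn F (Metric.closedBall w₀ ρ) :=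
    aux_inj hcn (le_trans hc'le (le_refl _)) hLip
  -- key identity
  have hkey : ∀ z ∈ Metric.ball (0:ℂ) 1, (z-1)⁻¹ ∈ Metric.ball w₀ (4*ρ) →
      f z = F ((z-1)⁻¹) := by
    intro z hz hzb
    obtain ⟨hw0, hinv, -⟩ := hgeo _ hzb
    have hz1 : z - 1 ≠ 0 := fun hc => hw0 (by rw [hc, inv_zero])
    have hzU : z ∈ U := by
      apply hδU
      rw [mem_ball, dist_eq_norm]
      have : ‖z - 1‖ = ‖((z-1)⁻¹)⁻¹‖ := by rw [inv_inv]
      rw [this]; linarith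
    have hfz := hfh z ⟨hz, hzU⟩
    have hdsl : h z - h 1 = (z - 1) * dslope h 1 z := by
      have := sub_smul_dslope h 1 z
      rw [smul_eq_mul] at this
      exact this.symm
    have h1z : (1:ℂ) + ((z-1)⁻¹)⁻¹ = z := by rw [inv_inv]; ring
    rw [hfz]
    show h z / (z-1) = h 1 * (z-1)⁻¹ + G ((z-1)⁻¹)
    rw [hGdef]
    simp only []
    rw [h1z]
    have hhz : h z = h 1 + (z - 1) * dslope h 1 z := by linear_combination hdsl
    rw [hhz]
    field_simp
  set a : ℂ := F w₀ with hadef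
  set V : Set ℂ := (Metric.ball (0:ℂ) 1 ∩ (fun z : ℂ => (z-1)⁻¹) ⁻¹' (Metric.ball w₀ ρ)) ∩
    (Metric.ball (0:ℂ) 1 ∩ f ⁻¹' (Metric.ball a R)) with hVdef
  have hball4 : Metric.ball w₀ ρ ⊆ Metric.ball w₀ (4*ρ) :=
    Metric.ball_subset_ball (by linarith)
  refine ⟨a, V, ?_, ?_, ?_, ?_⟩
  · -- open
    have hne1 : ∀ z ∈ Metric.ball (0:ℂ) 1, z - 1 ≠ 0 := by
      intro z hz hc
      rw [mem_ball, dist_zero_right] at hz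
      rw [sub_eq_zero] at hc
      rw [hc] at hz
      simp at hz
    have hc1 : ContinuousOn (fun z : ℂ => (z-1)⁻¹) (Metric.ball (0:ℂ) 1) :=
      ContinuousOn.inv₀ (by fun_prop) hne1
    exact ((hc1.isOpen_inter_preimage isOpen_ball isOpen_ball)).inter
      ((hf.continuousOn).isOpen_inter_preimage isOpen_ball isOpen_ball)
  · exact fun z hz => hz.1.1
  · -- injective
    intro z1 hz1 z2 hz2 heq
    have hk1 := hkey z1 hz1.1.1 (hball4 hz1.1.2)
    have hk2 := hkey z2 hz2.1.1 (hball4 hz2.1.2)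
    have hFeq : F ((z1-1)⁻¹) = F ((z2-1)⁻¹) := by rw [← hk1, ← hk2, heq]
    have hw12 := hFinj (Metric.ball_subset_closedBall hz1.1.2)
      (Metric.ball_subset_closedBall hz2.1.2) hFeq
    have := inv_injective hw12
    linear_combination this
  · -- image
    ext u
    constructor
    · rintro ⟨z, hz, rfl⟩
      exact hz.2.2
    · intro hu
      have hu' : u ∈ Metric.closedBall (F w₀) (((nri.nnnorm : ℝ)⁻¹ - c') * (ρ/2)) := by
        rw [mem_closedBall]
        rw [mem_ball] at hu
        have : dist u (F w₀) < R := by rw [hadef] at hu; exact hu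
        linarith [hrad]
      obtain ⟨w, hw, hFw⟩ := hsurj hu'
      rw [mem_closedBall] at hw
      have hw4 : w ∈ Metric.ball w₀ (4*ρ) := by
        rw [mem_ball]; calc dist w w₀ ≤ ρ/2 := hw
          _ < 4*ρ := by linarith
      obtain ⟨hw0, hinv, hzb⟩ := hgeo w hw4
      have hzw : ((1 + w⁻¹) - 1)⁻¹ = w := by
        rw [add_sub_cancel_left, inv_inv]
      refine ⟨1 + w⁻¹, ⟨⟨hzb, ?_⟩, ⟨hzb, ?_⟩⟩, ?_⟩
      · show ((1 + w⁻¹) - 1)⁻¹ ∈ Metric.ball w₀ ρ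
        rw [hzw, mem_ball]
        calc dist w w₀ ≤ ρ/2 := hw
          _ < ρ := by linarith
      · show f (1 + w⁻¹) ∈ Metric.ball a R
        have := hkey (1 + w⁻¹) hzb (by rw [hzw]; exact hw4)
        rw [this, hzw, hFw]
        exact hu
      · have := hkey (1 + w⁻¹) hzb (by rw [hzw]; exact hw4)
        rw [this, hzw, hFw]
end

section
/- Let f be analytic on the open unit disk 𝔻 = {z ∈ ℂ : |z| < 1} with a simple pole at the boundary point 1, i.e. there exist an open set U ⊆ ℂ containing 1 and an analytic function h on U with h(1) ≠ 0 such that f(z) = h(z)/(z − 1) for all z ∈ 𝔻 ∩ U, and suppose f'(0) = 1. Then the radius of the largest disk contained in f(𝔻) is infinite: for every R > 0 there exists a point a ∈ ℂ such that {w ∈ ℂ : |w − a| < R} ⊆ f(𝔻). -/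
open Complex Metric Set


lemma aux_inv_mem_ball {c ω : ℂ} {r : ℝ} (hr : 0 < r) (hs : r ^ 2 < normSq c)
    (hω : ω ∈ Metric.ball ((starRingEnd ℂ) c / ((normSq c - r ^ 2 : ℝ) : ℂ))
      (r / (normSq c - r ^ 2))) :
    ω ≠ 0 ∧ ω⁻¹ ∈ Metric.ball c r := by
  have hs0 : 0 < normSq c - r ^ 2 := sub_pos.mpr hs
  set s : ℝ := normSq c - r ^ 2 with hsdef
  have hcr : r < ‖c‖ := by
    have : r ^ 2 < ‖c‖ ^ 2 := by rwa [Complex.sq_norm]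
    exact lt_of_pow_lt_pow_left₀ 2 (norm_nonneg c) this
  have hA : ‖(starRingEnd ℂ) c / ((s : ℝ) : ℂ)‖ = ‖c‖ / s := by
    simp [abs_of_pos hs0, map_div₀]
  have hdist : ‖ω - (starRingEnd ℂ) c / ((s : ℝ) : ℂ)‖ < r / s := by
    rw [← dist_eq_norm]; exact mem_ball.mp hω
  have hω0 : ω ≠ 0 := by
    rw [← norm_pos_iff]
    have h1 : ‖(starRingEnd ℂ) c / ((s : ℝ) : ℂ)‖ - ‖ω‖ ≤ ‖ω - (starRingEnd ℂ) c / ((s : ℝ) : ℂ)‖ := by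
      rw [norm_sub_rev]; exact norm_sub_norm_le _ _
    rw [hA] at h1
    have h2 : r / s < ‖c‖ / s := by gcongr
    linarith
  refine ⟨hω0, ?_⟩
  rw [mem_ball, dist_eq_norm]
  have hωn : 0 < ‖ω‖ := norm_pos_iff.mpr hω0
  have key : normSq (1 - c * ω) < r ^ 2 * normSq ω := by
    have h2 : normSq (ω - (starRingEnd ℂ) c / ((s : ℝ) : ℂ)) < (r / s) ^ 2 := by
      rw [← Complex.sq_norm]
      exact pow_lt_pow_left₀ hdist (norm_nonneg _) two_ne_zero
    have hsc : ((s : ℝ) : ℂ) ≠ 0 := by exact_mod_cast hs0.ne'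
    have h3 : ω - (starRingEnd ℂ) c / ((s : ℝ) : ℂ)
        = (((s:ℝ):ℂ) * ω - (starRingEnd ℂ) c) / ((s:ℝ):ℂ) := by
      field_simp
    rw [h3, Complex.normSq_div, Complex.normSq_sub, div_pow] at h2
    have hns : normSq ((s:ℝ):ℂ) = s ^ 2 := by
      simp [Complex.normSq_apply]; ring
    rw [hns] at h2
    have hs2 : (0:ℝ) < s ^ 2 := by positivity
    have h4 : normSq (((s:ℝ):ℂ) * ω) + normSq ((starRingEnd ℂ) c)
        - 2 * ((((s:ℝ):ℂ) * ω) * (starRingEnd ℂ) ((starRingEnd ℂ) c)).re < r ^ 2 := by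
      rw [div_lt_div_iff₀ hs2 hs2] at h2
      nlinarith [h2, hs2]
    rw [Complex.normSq_mul, hns, Complex.normSq_conj] at h4
    have hcc : (starRingEnd ℂ) ((starRingEnd ℂ) c) = c := Complex.conj_conj c
    rw [hcc] at h4
    have hre : ((((s:ℝ):ℂ) * ω) * c).re = s * (ω * c).re := by
      rw [mul_assoc]; exact Complex.re_ofReal_mul s (ω * c)
    rw [hre] at h4
    -- h4 : s^2 * normSq ω + normSq c - 2*(s*(ω*c).re) < r^2
    rw [Complex.normSq_sub, Complex.normSq_one, Complex.normSq_mul]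
    have hre2 : ((1:ℂ) * (starRingEnd ℂ) (c * ω)).re = (ω * c).re := by
      rw [one_mul, Complex.conj_re, mul_comm]
    rw [hre2]
    rw [hsdef] at h4
    nlinarith [h4, sub_pos.mpr hs]
  have hnorm : ‖1 - c * ω‖ < r * ‖ω‖ := by
    have hrhs : (0:ℝ) ≤ r * ‖ω‖ := by positivity
    refine lt_of_pow_lt_pow_left₀ 2 hrhs ?_
    rw [mul_pow, Complex.sq_norm]
    calc normSq (1 - c * ω) < r ^ 2 * normSq ω := key
      _ = r ^ 2 * ‖ω‖ ^ 2 := by rw [Complex.sq_norm]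
  have hfact : ω⁻¹ - c = (1 - c * ω) * ω⁻¹ := by
    field_simp
  rw [hfact, norm_mul, norm_inv]
  rw [mul_inv_lt_iff₀ hωn]
  exact hnorm

/-- Landau part of Theorem 2.1: if `f` is analytic on the unit disk with a simple pole at
the boundary point `1` and `f'(0) = 1`, then `f(𝔻)` contains disks of every radius. -/
theorem disks_unbounded_of_boundary_pole_at_one
    (f : ℂ → ℂ) (hf : AnalyticOnNhd ℂ f (Metric.ball (0:ℂ) 1))
    (U : Set ℂ) (hU : IsOpen U) (h1U : (1:ℂ) ∈ U)
    (h : ℂ → ℂ) (hh : AnalyticOnNhd ℂ h U) (hh1 : h 1 ≠ 0)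
    (hfh : ∀ z ∈ Metric.ball (0:ℂ) 1 ∩ U, f z = h z / (z - 1))
    (hf0 : deriv f 0 = 1) :
    ∀ R > 0, ∃ a : ℂ, Metric.ball a R ⊆ f '' (Metric.ball (0:ℂ) 1) := by
  intro R hR
  -- a neighborhood of 1 inside U where h is nonzero
  have hmem : U ∩ {z : ℂ | h z ≠ 0} ∈ nhds (1:ℂ) := by
    refine Filter.inter_mem (hU.mem_nhds h1U) ?_
    exact (hh 1 h1U).continuousAt.eventually_ne hh1
  obtain ⟨r₀, hr₀, hball₀⟩ := Metric.mem_nhds_iff.mp hmem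
  -- the function F with analytic local inverse G at 0
  set F : ℂ → ℂ := fun z => (z - 1) / h z with hFdef
  obtain ⟨p, hp⟩ := hh 1 h1U
  have hdh : HasStrictDerivAt h (p 1 fun _ => 1) 1 := hp.hasStrictDerivAt
  have hF : HasStrictDerivAt F ((h 1)⁻¹) 1 := by
    have hid : HasStrictDerivAt (fun z : ℂ => z - 1) 1 1 := (hasStrictDerivAt_id (1:ℂ)).sub_const 1
    have := hid.div hdh hh1
    have heq : (1 * h 1 - ((1:ℂ) - 1) * (p 1 fun _ => 1)) / h 1 ^ 2 = (h 1)⁻¹ := by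
      field_simp
      ring
    rwa [heq] at this
  have ha0 : (h 1)⁻¹ ≠ 0 := inv_ne_zero hh1
  have hfd := hF.hasStrictFDerivAt_equiv ha0
  set G : ℂ → ℂ := hfd.localInverse F _ 1 with hGdef
  have hF1 : F 1 = 0 := by simp [hFdef]
  have hG0 : G 0 = 1 := by rw [← hF1]; exact hfd.localInverse_apply_image
  have hGd : HasStrictDerivAt G (h 1) 0 := by
    have := hF.to_localInverse (hf' := ha0)
    rw [hF1, inv_inv] at this
    exact this
  set a : ℂ := h 1 with hadef
  have hna : 0 < ‖a‖ := norm_pos_iff.mpr hh1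
  have hna' : (0:ℝ) < ‖a‖ := hna
  -- eventual facts near 0
  have hev1 : ∀ᶠ w in nhds (0:ℂ), F (G w) = w := by
    have := hfd.eventually_right_inverse
    rwa [hF1] at this
  have hev2 : ∀ᶠ w in nhds (0:ℂ), G w ∈ Metric.ball (1:ℂ) r₀ := by
    have hc : ContinuousAt G 0 := by
      have := hfd.localInverse_continuousAt
      rwa [hF1] at this
    exact hc.eventually_mem (by rw [hG0]; exact Metric.ball_mem_nhds _ hr₀)
  have hev3 : ∀ᶠ w in nhds (0:ℂ), ‖G w - 1 - w * a‖ ≤ ‖a‖ / 6 * ‖w‖ := by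
    have hlo := hasDerivAt_iff_isLittleO.mp hGd.hasDerivAt
    have := hlo.def (by positivity : (0:ℝ) < ‖a‖ / 6)
    simpa [hG0, smul_eq_mul] using this
  obtain ⟨δ, hδ0, hδ⟩ := Metric.eventually_nhds_iff.mp ((hev1.and hev2).and hev3)
  -- choose the scale t
  set t : ℝ := min (min (1/2) (‖a‖ * δ / 2)) (‖a‖ / (2 * R)) with htdef
  have ht0 : 0 < t := by
    refine lt_min (lt_min one_half_pos ?_) ?_ <;> positivity
  have ht1 : t ≤ 1/2 := le_trans (min_le_left _ _) (min_le_left _ _)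
  have htδ : t ≤ ‖a‖ * δ / 2 := le_trans (min_le_left _ _) (min_le_right _ _)
  have htR : t ≤ ‖a‖ / (2 * R) := min_le_right _ _
  set c : ℂ := -((t : ℂ) / a) with hcdef
  set r : ℝ := t / (2 * ‖a‖) with hrdef
  have hr0 : 0 < r := by positivity
  have hnc : ‖c‖ = t / ‖a‖ := by
    rw [hcdef, norm_neg, norm_div]
    simp [abs_of_pos ht0]
  have hnormSqc : normSq c = (t / ‖a‖) ^ 2 := by
    rw [← Complex.sq_norm, hnc]
  have hs : r ^ 2 < normSq c := by
    rw [hnormSqc, hrdef]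
    rw [div_pow, div_pow]
    rw [div_lt_div_iff₀ (by positivity) (by positivity)]
    nlinarith [mul_pos (mul_pos ht0 ht0) (mul_pos hna hna)]
  have hsval : normSq c - r ^ 2 = 3 * t ^ 2 / (4 * ‖a‖ ^ 2) := by
    rw [hnormSqc, hrdef]; field_simp; ring
  have hρ : r / (normSq c - r ^ 2) = 2 * ‖a‖ / (3 * t) := by
    rw [hsval, hrdef]; field_simp [ht0.ne', hna.ne']; ring
  have hRρ : R < r / (normSq c - r ^ 2) := by
    rw [hρ]
    have : t < 2 * ‖a‖ / (3 * R) := by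
      calc t ≤ ‖a‖ / (2 * R) := htR
        _ < 2 * ‖a‖ / (3 * R) := by
          rw [div_lt_div_iff₀ (by positivity) (by positivity)]; nlinarith [hna, hR]
    rw [lt_div_iff₀ (by positivity)]
    rw [lt_div_iff₀ (by positivity)] at this
    nlinarith [this]
  refine ⟨(starRingEnd ℂ) c / ((normSq c - r ^ 2 : ℝ) : ℂ), fun ω hω => ?_⟩
  have hω' : ω ∈ Metric.ball ((starRingEnd ℂ) c / ((normSq c - r ^ 2 : ℝ) : ℂ))
      (r / (normSq c - r ^ 2)) := Metric.ball_subset_ball hRρ.le hω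
  obtain ⟨hω0, hwinv⟩ := aux_inv_mem_ball hr0 hs hω'
  set w : ℂ := ω⁻¹ with hwdef
  have hw0 : w ≠ 0 := inv_ne_zero hω0
  have hwc : ‖w - c‖ < r := by rw [← dist_eq_norm]; exact mem_ball.mp hwinv
  have hwnorm : ‖w‖ < 3 * t / (2 * ‖a‖) := by
    calc ‖w‖ ≤ ‖w - c‖ + ‖c‖ := by
          simpa using norm_add_le (w - c) c
      _ < r + t / ‖a‖ := by rw [hnc]; linarith
      _ = 3 * t / (2 * ‖a‖) := by rw [hrdef]; field_simp; ring
  have hwδ : dist w 0 < δ := by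
    rw [dist_zero_right]
    calc ‖w‖ < 3 * t / (2 * ‖a‖) := hwnorm
      _ ≤ 3 * (‖a‖ * δ / 2) / (2 * ‖a‖) := by gcongr
      _ = 3 * δ / 4 := by field_simp; ring
      _ < δ := by linarith
  obtain ⟨⟨hFG, hGball⟩, hlin⟩ := hδ hwδ
  set z : ℂ := G w with hzdef
  clear_value z
  clear hzdef hδ hev1 hev2 hev3 hGd hG0 hGdef
  clear_value G
  clear G hfd
  have hzU : z ∈ U := (hball₀ hGball).1
  have hhz : h z ≠ 0 := (hball₀ hGball).2
  -- z is in the unit disk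
  have hz1 : ‖z‖ < 1 := by
    have h1aw : ‖1 + w * a‖ ≤ 1 - t / 2 := by
      have hca : c * a = -(t : ℂ) := by
        rw [hcdef]; field_simp
      have hrw : (1 : ℂ) + w * a = (1 - (t:ℂ)) + (w - c) * a := by
        rw [sub_mul, hca]; ring
      rw [hrw]
      calc ‖(1 - (t:ℂ)) + (w - c) * a‖ ≤ ‖(1:ℂ) - (t:ℂ)‖ + ‖(w - c) * a‖ := norm_add_le _ _
        _ ≤ (1 - t) + r * ‖a‖ := by
            rw [norm_mul]
            have h1t : ‖(1:ℂ) - (t:ℂ)‖ = 1 - t := by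
              rw [← Complex.ofReal_one, ← Complex.ofReal_sub, Complex.norm_real,
                Real.norm_eq_abs, _root_.abs_of_nonneg (by linarith)]
            rw [h1t]
            have := mul_le_mul_of_nonneg_right hwc.le (norm_nonneg a)
            linarith
        _ = 1 - t / 2 := by rw [hrdef]; field_simp; ring
    have hlin' : ‖z - 1 - w * a‖ ≤ t / 4 := by
      calc ‖z - 1 - w * a‖ ≤ ‖a‖ / 6 * ‖w‖ := hlin
        _ ≤ ‖a‖ / 6 * (3 * t / (2 * ‖a‖)) := by
            exact mul_le_mul_of_nonneg_left hwnorm.le (by positivity)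
        _ = t / 4 := by field_simp; ring
    calc ‖z‖ = ‖(1 + w * a) + (z - 1 - w * a)‖ := by congr 1; ring
      _ ≤ ‖1 + w * a‖ + ‖z - 1 - w * a‖ := norm_add_le _ _
      _ ≤ (1 - t / 2) + t / 4 := add_le_add h1aw hlin'
      _ < 1 := by linarith
  have hzD : z ∈ Metric.ball (0:ℂ) 1 := by
    rwa [mem_ball, dist_zero_right]
  -- compute f z
  have hfz : f z = ω := by
    have hF' : (z - 1) / h z = w := hFG
    have hz1' : z - 1 = w * h z := by
      field_simp at hF'
      linear_combination hF'
    have : f z = h z / (z - 1) := hfh z ⟨hzD, hzU⟩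
    have hcalc : h z / (w * h z) = w⁻¹ := by
      rw [mul_comm, ← div_div, div_self hhz, one_div]
    rw [this, hz1', hcalc, hwdef, inv_inv]
  exact ⟨z, hzD, hfz⟩
end

section
/- Let f be analytic on the open unit disk 𝔻 = {z ∈ ℂ : |z| < 1} with a simple pole at the boundary point 1, i.e. there exist an open set U ⊆ ℂ containing 1 and an analytic function h on U with h(1) ≠ 0 such that f(z) = h(z)/(z − 1) for all z ∈ 𝔻 ∩ U. Then (1 − t²)|f'(t)| → ∞ as t → 1⁻ along the real axis; in particular the Bloch semi-norm ‖f‖ = sup_{z∈𝔻} (1 − |z|²)|f'(z)| is infinite. -/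
open Complex Metric Set Filter Topology

/-- Key estimate in the proof of Theorem 2.1: if `f` is analytic on the unit disk with a
simple pole at the boundary point `1`, then `(1 - t²)|f'(t)| → ∞` as `t → 1⁻`, and in
particular the Bloch semi-norm `sup_{z ∈ 𝔻} (1 - |z|²)|f'(z)|` is infinite. -/
theorem bloch_seminorm_infinite_of_boundary_pole_at_one
    (f : ℂ → ℂ) (hf : AnalyticOnNhd ℂ f (Metric.ball (0:ℂ) 1))
    (U : Set ℂ) (hU : IsOpen U) (h1U : (1:ℂ) ∈ U)
    (h : ℂ → ℂ) (hh : AnalyticOnNhd ℂ h U) (hh1 : h 1 ≠ 0)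
    (hfh : ∀ z ∈ Metric.ball (0:ℂ) 1 ∩ U, f z = h z / (z - 1)) :
    Filter.Tendsto (fun t : ℝ => (1 - t ^ 2) * ‖deriv f (t : ℂ)‖)
      (nhdsWithin 1 (Set.Iio 1)) Filter.atTop ∧
    ∀ M > 0, ∃ z ∈ Metric.ball (0:ℂ) 1,
      M < (1 - ‖z‖ ^ 2) * ‖deriv f z‖ := by
  set l : Filter ℝ := nhdsWithin 1 (Set.Iio 1) with hl
  set V : Set ℂ := Metric.ball (0:ℂ) 1 ∩ U with hV
  have hVopen : IsOpen V := Metric.isOpen_ball.inter hU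
  -- coercion tendsto
  have hcoe : Tendsto (fun t : ℝ => (t : ℂ)) l (𝓝 1) := by
    have : Tendsto (fun t : ℝ => (t : ℂ)) (𝓝 1) (𝓝 1) := by
      simpa using Complex.continuous_ofReal.tendsto 1
    exact this.mono_left nhdsWithin_le_nhds
  have hIoo : ∀ᶠ t : ℝ in l, t ∈ Set.Ioo (0:ℝ) 1 :=
    Ioo_mem_nhdsLT_of_mem ⟨by norm_num, le_rfl⟩
  have hUmem : ∀ᶠ t : ℝ in l, (t : ℂ) ∈ U := hcoe (hU.mem_nhds h1U)
  -- the key identity for deriv f at real points near 1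
  have key : ∀ᶠ t : ℝ in l, (1 - t ^ 2) * ‖deriv f (t : ℂ)‖ =
      ((1 + t) / (1 - t)) *
        ‖deriv h (t : ℂ) * ((t : ℂ) - 1) - h (t : ℂ)‖ := by
    filter_upwards [hIoo, hUmem] with t ht htU
    have htb : (t : ℂ) ∈ Metric.ball (0:ℂ) 1 := by
      simp [Complex.norm_real, Real.norm_eq_abs, abs_lt]
      constructor <;> [linarith [ht.1]; exact ht.2]
    have htV : (t : ℂ) ∈ V := ⟨htb, htU⟩
    have hz1 : (t : ℂ) - 1 ≠ 0 := by
      intro hc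
      have : (t : ℂ) = 1 := by linear_combination hc
      have := congrArg Complex.re this
      simp at this
      linarith [ht.2]
    have heq : f =ᶠ[𝓝 ((t : ℂ))] fun z => h z / (z - 1) := by
      filter_upwards [hVopen.mem_nhds htV] with z hz using hfh z hz
    have hdh : DifferentiableAt ℂ h (t : ℂ) := (hh _ htU).differentiableAt
    have hderiv : deriv f (t : ℂ) =
        (deriv h (t : ℂ) * ((t : ℂ) - 1) - h (t : ℂ) * 1) / ((t : ℂ) - 1) ^ 2 := by
      rw [heq.deriv_eq]
      rw [deriv_fun_div (d := fun z : ℂ => z - 1) hdh (differentiableAt_id.sub_const 1) hz1]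
      simp
    rw [hderiv]
    rw [norm_div, norm_pow]
    have habs : ‖(t : ℂ) - 1‖ = 1 - t := by
      rw [show ((t : ℂ) - 1) = ((t - 1 : ℝ) : ℂ) by push_cast; ring,
        Complex.norm_real, Real.norm_eq_abs, abs_of_neg (by linarith [ht.2])]
      ring
    rw [habs, mul_one]
    have h1t : (0:ℝ) < 1 - t := by linarith [ht.2]
    field_simp
    ring
  -- limit of the abs factor
  have habs_tendsto : Tendsto
      (fun t : ℝ => ‖deriv h (t : ℂ) * ((t : ℂ) - 1) - h (t : ℂ)‖)
      l (𝓝 ‖h 1‖) := by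
    have hcont : ContinuousAt
        (fun z : ℂ => ‖deriv h z * (z - 1) - h z‖) 1 := by
      apply continuous_norm.continuousAt.comp
      exact (((hh.deriv 1 h1U).continuousAt.mul (continuousAt_id.sub continuousAt_const)).sub
        (hh 1 h1U).continuousAt)
    have := hcont.tendsto.comp hcoe
    simpa [Function.comp_def] using this
  -- (1+t)/(1-t) → ∞
  have hrat : Tendsto (fun t : ℝ => (1 + t) / (1 - t)) l atTop := by
    have hnum : Tendsto (fun t : ℝ => 1 + t) l (𝓝 2) := by
      have h2 : Tendsto (fun t : ℝ => 1 + t) (𝓝 1) (𝓝 (1 + 1)) :=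
        (continuous_const.add continuous_id).tendsto 1
      norm_num at h2
      exact h2.mono_left nhdsWithin_le_nhds
    have hden : Tendsto (fun t : ℝ => (1 - t)⁻¹) l atTop := by
      apply tendsto_inv_nhdsGT_zero.comp
      rw [tendsto_nhdsWithin_iff]
      constructor
      · have h2 : Tendsto (fun t : ℝ => 1 - t) (𝓝 1) (𝓝 (1 - 1)) :=
          (continuous_const.sub continuous_id).tendsto 1
        norm_num at h2
        exact h2.mono_left nhdsWithin_le_nhds
      · filter_upwards [self_mem_nhdsWithin] with t (ht : t < 1)
        simpa using by linarith
    have := hnum.pos_mul_atTop (by norm_num) hden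
    simpa [div_eq_mul_inv] using this
  have hmain : Tendsto (fun t : ℝ => (1 - t ^ 2) * ‖deriv f (t : ℂ)‖)
      l atTop := by
    have hpos : (0:ℝ) < ‖h 1‖ := by
      simpa [norm_pos_iff] using hh1
    have := habs_tendsto.pos_mul_atTop hpos hrat
    apply Tendsto.congr' _ (by simpa [mul_comm] using this)
    filter_upwards [key] with t ht using by rw [ht, mul_comm]
  refine ⟨hmain, fun M hM => ?_⟩
  have : ∀ᶠ t : ℝ in l, M < (1 - t ^ 2) * ‖deriv f (t : ℂ)‖ :=
    hmain.eventually_gt_atTop M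
  have hne : l.NeBot := by rw [hl]; infer_instance
  obtain ⟨t, ht, hMt⟩ := (hIoo.and this).exists
  refine ⟨(t : ℂ), ?_, ?_⟩
  · simp only [mem_ball, dist_zero_right, Complex.norm_real, Real.norm_eq_abs, abs_lt]
    constructor <;> [linarith [ht.1]; exact ht.2]
  · have habst : ‖(t : ℂ)‖ = t := by
      rw [Complex.norm_real, Real.norm_eq_abs, abs_of_pos ht.1]
    rw [habst]
    exact hMt
end

section
/- Let λ ∈ ℂ with |λ| = 1, and let f be analytic on the open unit disk 𝔻 = {z ∈ ℂ : |z| < 1} with a simple pole at λ, i.e. there exist an open set U ⊆ ℂ containing λ and an analytic function h on U with h(λ) ≠ 0 such that f(z) = h(z)/(z − λ) for all z ∈ 𝔻 ∩ U, and suppose f'(0) = 1. Then for every R > 0 there exist a point a ∈ ℂ and an open set V ⊆ 𝔻 such that f is injective on V and f(V) = {w ∈ ℂ : |w − a| < R}; in particular, for every R > 0 there exists a ∈ ℂ with {w : |w − a| < R} ⊆ f(𝔻). -/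
open Complex Metric Set

private lemma sq_cmp {x s : ℝ} (hx : 0 ≤ x) (hs : 0 ≤ s) : x < s ↔ x^2 < s^2 := by
  constructor <;> intro h <;> nlinarith

private lemma key_identity (a w : ℂ) (R : ℝ) :
    Complex.normSq (((Complex.normSq a - R^2 : ℝ) : ℂ) * w - (starRingEnd ℂ) a) - R^2
      = (Complex.normSq a - R^2) * (Complex.normSq (1 - a*w) - R^2 * Complex.normSq w) := by
  simp only [Complex.normSq_apply, Complex.sub_re, Complex.sub_im, Complex.mul_re, Complex.mul_im,
    Complex.one_re, Complex.one_im, Complex.ofReal_re, Complex.ofReal_im, Complex.conj_re,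
    Complex.conj_im]
  ring

private lemma mem_ball_inv {a : ℂ} {R : ℝ} (hR : 0 < R) (ha : R < ‖a‖) (w : ℂ) :
    w ∈ Metric.ball ((starRingEnd ℂ) a / ((Complex.normSq a - R^2 : ℝ) : ℂ))
        (R / (Complex.normSq a - R^2)) ↔ (w ≠ 0 ∧ w⁻¹ ∈ Metric.ball a R) := by
  have habs : 0 ≤ ‖a‖ := norm_nonneg a
  have hK : 0 < Complex.normSq a - R^2 := by
    rw [Complex.normSq_eq_norm_sq]; nlinarith
  set K : ℝ := Complex.normSq a - R^2 with hK_def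
  have hKC : (K : ℂ) ≠ 0 := by exact_mod_cast ne_of_gt hK
  have lhs_iff : w ∈ Metric.ball ((starRingEnd ℂ) a / (K : ℂ)) (R / K) ↔
      Complex.normSq (1 - a*w) < R^2 * Complex.normSq w := by
    rw [Metric.mem_ball, Complex.dist_eq]
    have hrw : w - (starRingEnd ℂ) a / (K : ℂ) = ((K:ℂ) * w - (starRingEnd ℂ) a) / (K:ℂ) := by
      field_simp
    rw [hrw, norm_div, Complex.norm_real, Real.norm_eq_abs, abs_of_pos hK, div_lt_div_iff_of_pos_right hK,
      sq_cmp (norm_nonneg _) hR.le, Complex.sq_norm]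
    have := key_identity a w R
    rw [← hK_def] at this
    constructor <;> intro hlt <;> nlinarith
  rw [lhs_iff]
  constructor
  · intro hlt
    have hw : w ≠ 0 := by
      intro h0
      rw [h0] at hlt
      simp [Complex.normSq_one] at hlt
      nlinarith [Complex.normSq_nonneg (1 - a * 0)]
    refine ⟨hw, ?_⟩
    rw [Metric.mem_ball, Complex.dist_eq]
    have hrw : w⁻¹ - a = (1 - a*w) / w := by field_simp
    have hwpos : 0 < ‖w‖ := norm_pos_iff.mpr hw
    rw [hrw, norm_div, div_lt_iff₀ hwpos, sq_cmp (norm_nonneg _) (by positivity),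
      mul_pow, Complex.sq_norm, Complex.sq_norm]
    exact hlt
  · rintro ⟨hw, hball⟩
    rw [Metric.mem_ball, Complex.dist_eq] at hball
    have hrw : w⁻¹ - a = (1 - a*w) / w := by field_simp
    have hwpos : 0 < ‖w‖ := norm_pos_iff.mpr hw
    rw [hrw, norm_div, div_lt_iff₀ hwpos, sq_cmp (norm_nonneg _) (by positivity),
      mul_pow, Complex.sq_norm, Complex.sq_norm] at hball
    exact hball


private lemma choose_params (R r₀ C : ℝ) (hR : 0 < R) (hr0 : 0 < r₀) (hC : 0 < C) :
    ∃ M K t s : ℝ, 0 < M ∧ 0 < K ∧ 0 < t ∧ 0 < s ∧ K = M^2 - R^2 ∧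
      t = M/K ∧ s = R/K ∧ 4*s ≤ t ∧ t*C ≤ 1/2 ∧ t + s < r₀ ∧ R < M := by
  set M : ℝ := max (4*R) (max (4/r₀) (4*C)) with hM_def
  have hM1 : 4*R ≤ M := le_max_left _ _
  have hM2 : 4/r₀ ≤ M := le_trans (le_max_left _ _) (le_max_right _ _)
  have hM3 : 4*C ≤ M := le_trans (le_max_right _ _) (le_max_right _ _)
  have hM0 : 0 < M := by linarith
  set K : ℝ := M^2 - R^2 with hK_def
  have hKpos : 0 < K := by nlinarith
  set t : ℝ := M/K with ht_def
  set s : ℝ := R/K with hs_def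
  have ht : 0 < t := div_pos hM0 hKpos
  have hs : 0 < s := div_pos hR hKpos
  have htK : t*K = M := div_mul_cancel₀ _ (ne_of_gt hKpos)
  have hsK : s*K = R := div_mul_cancel₀ _ (ne_of_gt hKpos)
  have hK15 : 15/16*M^2 ≤ K := by nlinarith
  have hst : 4*s ≤ t := by nlinarith
  have htM : t*M ≤ 16/15 := by nlinarith [mul_le_mul_of_nonneg_left hK15 ht.le, mul_pos hM0 hM0]
  have htC : t*C ≤ 1/2 := by
    nlinarith [mul_nonneg ht.le (by linarith : (0:ℝ) ≤ M - 4*C)]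
  have hMr : 4 ≤ M*r₀ := by
    rw [div_le_iff₀ hr0] at hM2; linarith
  have hts : t + s < r₀ := by
    have h2 : (t+s)*M ≤ 4/3 := by
      nlinarith [mul_le_mul_of_nonneg_right hst hM0.le]
    nlinarith
  exact ⟨M, K, t, s, hM0, hKpos, ht, hs, rfl, rfl, rfl, hst, htC, hts, by linarith⟩

private lemma normSq_bound {t s C d e A H X : ℝ} (ht : 0 < t) (hs : 0 < s) (hC : 0 < C)
    (hst : 4*s ≤ t) (htC : t*C ≤ 1/2) (hd : d < s) (he : e ≤ C/8) (hd0 : 0 ≤ d) (he0 : 0 ≤ e)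
    (hA0 : 0 ≤ A) (hH0 : 0 ≤ H) (hA : A ≤ d + t) (hH : H ≤ 9/8*C)
    (hX : X ≤ -(t*C) + d*C + A*e) :
    A^2*H^2 + 2*X < 0 := by
  have hAub : A ≤ 5/4*t := by linarith
  have h1 : A^2 ≤ (5/4*t)^2 := by nlinarith
  have h2 : H^2 ≤ (9/8*C)^2 := by nlinarith
  have hq : A^2*H^2 ≤ (5/4*t)^2*(9/8*C)^2 := by nlinarith
  nlinarith [mul_pos ht hC, mul_lt_mul_of_pos_right hd hC,
    mul_le_mul hAub he he0 (by positivity),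
    mul_le_mul_of_nonneg_left htC (mul_nonneg ht.le hC.le)]

/-- Corollary 2.3: if `f` is analytic on the unit disk with a simple pole at a boundary
point `λ` (with `|λ| = 1`) and `f'(0) = 1`, then `f(𝔻)` contains schlicht disks of every
radius; in particular it contains disks of every radius. -/
theorem schlicht_disks_unbounded_of_boundary_pole
    (lam : ℂ) (hlam : ‖lam‖ = 1)
    (f : ℂ → ℂ) (hf : AnalyticOnNhd ℂ f (Metric.ball (0:ℂ) 1))
    (U : Set ℂ) (hU : IsOpen U) (hlamU : lam ∈ U)
    (h : ℂ → ℂ) (hh : AnalyticOnNhd ℂ h U) (hhlam : h lam ≠ 0)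
    (hfh : ∀ z ∈ Metric.ball (0:ℂ) 1 ∩ U, f z = h z / (z - lam))
    (hf0 : deriv f 0 = 1) :
    (∀ R > 0, ∃ (a : ℂ) (V : Set ℂ), IsOpen V ∧ V ⊆ Metric.ball (0:ℂ) 1 ∧
      Set.InjOn f V ∧ f '' V = Metric.ball a R) ∧
    (∀ R > 0, ∃ a : ℂ, Metric.ball a R ⊆ f '' (Metric.ball (0:ℂ) 1)) := by
  -- setup
  set c : ℂ := h lam with hc_def
  have hC : 0 < ‖c‖ := norm_pos_iff.mpr hhlam
  set C : ℝ := ‖c‖ with hC_def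
  have hCC : (C : ℂ) ≠ 0 := by exact_mod_cast ne_of_gt hC
  set u : ℂ := -(lam * (starRingEnd ℂ) c) / (C : ℂ) with hu_def
  have hu_abs : ‖u‖ = 1 := by
    rw [hu_def, norm_div, Complex.norm_real, Real.norm_eq_abs, norm_neg, norm_mul, hlam,
      Complex.norm_conj, one_mul, abs_of_pos hC, ← hC_def, div_self (ne_of_gt hC)]
  have hll : lam * (starRingEnd ℂ) lam = 1 := by
    rw [Complex.mul_conj]
    rw [show Complex.normSq lam = 1 by rw [Complex.normSq_eq_norm_sq, hlam]; norm_num]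
    norm_num
  have hcc : c * (starRingEnd ℂ) c = ((C^2 : ℝ) : ℂ) := by
    rw [Complex.mul_conj, Complex.normSq_eq_norm_sq, ← hC_def]
  -- the good neighborhood S
  have hhcont : ContinuousOn h U := fun z hz => (hh z hz).continuousAt.continuousWithinAt
  set S : Set ℂ := U ∩ h ⁻¹' (Metric.ball c (C/8)) with hS_def
  have hS_open : IsOpen S := hhcont.isOpen_inter_preimage hU Metric.isOpen_ball
  have hlamS : lam ∈ S := ⟨hlamU, by show dist (h lam) c < C/8; rw [← hc_def, dist_self]; linarith⟩
  have hSU : S ⊆ U := fun z hz => hz.1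
  have hSh : ∀ z ∈ S, ‖h z - c‖ < C/8 := by
    intro z hz
    have := hz.2
    rwa [Set.mem_preimage, Metric.mem_ball, Complex.dist_eq] at this
  have hSne : ∀ z ∈ S, h z ≠ 0 := by
    intro z hz h0
    have := hSh z hz
    rw [h0, zero_sub, norm_neg] at this
    rw [← hC_def] at this
    linarith
  -- g and its strict derivative
  set g : ℂ → ℂ := fun z => (z - lam) / h z with hg_def
  have hhd : HasStrictDerivAt h (fderiv ℂ h lam 1) lam :=
    (hh lam hlamU).hasStrictFDerivAt.hasStrictDerivAt
  have hsub : HasStrictDerivAt (fun z => z - lam) 1 lam := (hasStrictDerivAt_id lam).sub_const lam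
  have hgd := hsub.div hhd hhlam
  have hval : (1 * h lam - (lam - lam) * fderiv ℂ h lam 1) / h lam ^ 2 = (h lam)⁻¹ := by
    rw [sub_self, zero_mul, sub_zero, one_mul, pow_two, div_mul_eq_div_div,
      div_self (show h lam ≠ 0 from hhlam), one_div]
  rw [hval] at hgd
  have hg'0 : (h lam)⁻¹ ≠ 0 := inv_ne_zero hhlam
  have Φ := hgd.hasStrictFDerivAt_equiv hg'0
  set ψ := Φ.localInverse g _ lam with hψ_def
  have hg0 : g lam = 0 := by simp [hg_def]
  -- radius r₁ : left inverse and membership in S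
  obtain ⟨r₁, hr₁0, hr₁⟩ := Metric.eventually_nhds_iff_ball.mp
    (Φ.eventually_left_inverse.and (hS_open.eventually_mem hlamS))
  -- radius r₀ : right inverse and ψ maps into ball lam r₁
  have hzero : ((fun z => z - lam) / h) lam = (0:ℂ) := by simp
  have hψ0 : ψ 0 = lam := by
    have := Φ.localInverse_apply_image
    rwa [hzero] at this
  have hrt := Φ.eventually_right_inverse
  rw [hzero] at hrt
  have hcontψ : ContinuousAt ψ 0 := by
    have := Φ.localInverse_continuousAt
    rwa [hzero] at this
  have hmem : Metric.ball lam r₁ ∈ nhds (ψ 0) := by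
    rw [hψ0]; exact Metric.ball_mem_nhds lam hr₁0
  obtain ⟨r₀, hr₀0, hr₀⟩ := Metric.eventually_nhds_iff_ball.mp
    (hrt.and (hcontψ.eventually_mem hmem))
  -- main construction
  have main : ∀ R > 0, ∃ (a : ℂ) (V : Set ℂ), IsOpen V ∧ V ⊆ Metric.ball (0:ℂ) 1 ∧
      Set.InjOn f V ∧ f '' V = Metric.ball a R := by
    intro R hR
    obtain ⟨M, K, t, s, hM0, hKpos, ht, hs, hK_def, ht_def, hs_def, hst, htC, hts, hRM⟩ :=
      choose_params R r₀ C hR hr₀0 hC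
    set a : ℂ := (M:ℂ) * (starRingEnd ℂ) u with ha_def
    have ha_abs : ‖a‖ = M := by
      rw [ha_def, norm_mul, Complex.norm_real, Real.norm_eq_abs, Complex.norm_conj, hu_abs, mul_one, abs_of_pos hM0]
    have hKns : Complex.normSq a - R^2 = K := by
      rw [Complex.normSq_eq_norm_sq, ha_abs, hK_def]
    have hRa : R < ‖a‖ := by rw [ha_abs]; linarith
    set b : ℂ := (starRingEnd ℂ) a / ((K:ℝ):ℂ) with hb_def
    have hb_tu : b = ((t:ℝ):ℂ) * u := by
      rw [hb_def, ha_def, map_mul, Complex.conj_conj, Complex.conj_ofReal, ht_def]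
      push_cast
      field_simp
    have hb_abs : ‖b‖ = t := by
      rw [hb_tu, norm_mul, Complex.norm_real, Real.norm_eq_abs, hu_abs, mul_one, abs_of_pos ht]
    have hmbi : ∀ w : ℂ, w ∈ Metric.ball b s ↔ (w ≠ 0 ∧ w⁻¹ ∈ Metric.ball a R) := by
      intro w
      have := mem_ball_inv hR hRa w
      rwa [hKns, ← hb_def, ← hs_def] at this
    -- the good direction: lam * conj (b * c) = -(t*C)
    have hbc : lam * (starRingEnd ℂ) (b * c) = -((t*C : ℝ) : ℂ) := by
      rw [hb_tu, hu_def]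
      simp only [map_mul, map_neg, map_div₀, Complex.conj_conj, Complex.conj_ofReal]
      field_simp
      have hcc' := hcc
      push_cast at hcc' ⊢
      linear_combination (-1 * ((t:ℝ):ℂ) * ((starRingEnd ℂ) c) * c) * hll
        + (-1 * ((t:ℝ):ℂ)) * hcc'
    -- the set V
    set V : Set ℂ := Metric.ball lam r₁ ∩ g ⁻¹' (Metric.ball b s) with hV_def
    have hVr₁ : V ⊆ Metric.ball lam r₁ := fun z hz => hz.1
    have hVS : V ⊆ S := fun z hz => (hr₁ z hz.1).2
    have hV_open : IsOpen V := by
      apply ContinuousOn.isOpen_inter_preimage _ Metric.isOpen_ball Metric.isOpen_ball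
      apply ContinuousOn.div
      · exact (continuous_id.sub continuous_const).continuousOn
      · exact hhcont.mono (fun z hz => hSU ((hr₁ z hz).2))
      · exact fun z hz => hSne z (hr₁ z hz).2
    -- the boundary estimate : V ⊆ unit disk
    have hVD : V ⊆ Metric.ball (0:ℂ) 1 := by
      intro z hz
      have hzS : z ∈ S := hVS hz
      have hhz : h z ≠ 0 := hSne z hzS
      have hη : ‖h z - c‖ < C/8 := hSh z hzS
      have hgz : g z ∈ Metric.ball b s := hz.2
      set w : ℂ := g z with hw_def
      have hwh : w * h z = z - lam := by
        rw [hw_def, hg_def]; field_simp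
      have hz_eq : z = lam + w * h z := by rw [hwh]; ring
      have hns : Complex.normSq z = 1 + Complex.normSq (w * h z)
          + 2*(lam * (starRingEnd ℂ) (w * h z)).re := by
        conv_lhs => rw [hz_eq]
        rw [Complex.normSq_add]
        rw [show Complex.normSq lam = 1 by rw [Complex.normSq_eq_norm_sq, hlam]; norm_num]
      have hd : ‖w - b‖ < s := by
        rw [← Complex.dist_eq]; exact hgz
      have hA : ‖w‖ ≤ ‖w - b‖ + t := by
        calc ‖w‖ = ‖(w - b) + b‖ := by ring_nf
          _ ≤ ‖w - b‖ + ‖b‖ := norm_add_le _ _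
          _ = ‖w - b‖ + t := by rw [hb_abs]
      have hH : ‖h z‖ ≤ 9/8*C := by
        calc ‖h z‖ = ‖c + (h z - c)‖ := by ring_nf
          _ ≤ ‖c‖ + ‖h z - c‖ := norm_add_le _ _
          _ ≤ C + C/8 := by rw [← hC_def]; linarith
          _ = 9/8*C := by ring
      have hdecomp : w * h z = b * c + ((w - b) * c + w * (h z - c)) := by ring
      have hXsplit : (lam * (starRingEnd ℂ) (w * h z)).re
          = -(t*C) + (lam * (starRingEnd ℂ) ((w - b) * c + w * (h z - c))).re := by
        rw [hdecomp, map_add, mul_add, Complex.add_re, hbc]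
        simp
      have hX2 : (lam * (starRingEnd ℂ) ((w - b) * c + w * (h z - c))).re
          ≤ ‖w - b‖ * C + ‖w‖ * ‖h z - c‖ := by
        calc (lam * (starRingEnd ℂ) ((w - b) * c + w * (h z - c))).re
            ≤ ‖lam * (starRingEnd ℂ) ((w - b) * c + w * (h z - c))‖ :=
              Complex.re_le_norm _
          _ = ‖(w - b) * c + w * (h z - c)‖ := by
              rw [norm_mul, hlam, one_mul, Complex.norm_conj]
          _ ≤ ‖(w - b) * c‖ + ‖w * (h z - c)‖ := norm_add_le _ _
          _ = ‖w - b‖ * C + ‖w‖ * ‖h z - c‖ := by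
              rw [norm_mul, norm_mul, ← hC_def]
      have hnswh : Complex.normSq (w * h z) = (‖w‖)^2 * (‖h z‖)^2 := by
        rw [Complex.normSq_eq_norm_sq, norm_mul, mul_pow]
      have habsw : 0 ≤ ‖w‖ := norm_nonneg w
      have habsh : 0 ≤ ‖h z‖ := norm_nonneg _
      have habsd : 0 ≤ ‖w - b‖ := norm_nonneg _
      have habse : 0 ≤ ‖h z - c‖ := norm_nonneg _
      have hns1 : Complex.normSq z < 1 := by
        rw [hns, hnswh, hXsplit]
        have key := normSq_bound ht hs hC hst htC hd hη.le habsd habse habsw habsh hA hH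
          (X := -(t*C) + (lam * (starRingEnd ℂ) ((w - b) * c + w * (h z - c))).re)
          (by linarith [hX2])
        linarith [key]
      rw [Metric.mem_ball, Complex.dist_eq, sub_zero]
      rw [sq_cmp (norm_nonneg z) zero_le_one, Complex.sq_norm]
      simpa using hns1
    -- image of V under g
    have hgV : g '' V = Metric.ball b s := by
      apply Set.Subset.antisymm
      · rintro _ ⟨z, hz, rfl⟩
        exact hz.2
      · intro w hw
        have hw0 : w ∈ Metric.ball (0:ℂ) r₀ := by
          rw [Metric.mem_ball, Complex.dist_eq, sub_zero]
          have : ‖w‖ ≤ ‖w - b‖ + t := by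
            calc ‖w‖ = ‖(w - b) + b‖ := by ring_nf
              _ ≤ ‖w - b‖ + ‖b‖ := norm_add_le _ _
              _ = ‖w - b‖ + t := by rw [hb_abs]
          have hd : ‖w - b‖ < s := by rw [← Complex.dist_eq]; exact hw
          linarith
        obtain ⟨hgψ, hψmem⟩ := hr₀ w hw0
        have hgψ' : g (ψ w) = w := hgψ
        refine ⟨ψ w, ⟨hψmem, ?_⟩, hgψ'⟩
        rw [Set.mem_preimage, hgψ']
        exact hw
    -- f = (g ·)⁻¹ on V
    have hf_eq : ∀ z ∈ V, f z = (g z)⁻¹ := by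
      intro z hz
      rw [hfh z ⟨hVD hz, hSU (hVS hz)⟩, hg_def]
      simp only
      rw [inv_div]
    -- injectivity of f on V
    have hinj : Set.InjOn f V := by
      intro x hx y hy hxy
      rw [hf_eq x hx, hf_eq y hy] at hxy
      have hgxy : g x = g y := inv_injective hxy
      have h1 : ψ (g x) = x := (hr₁ x hx.1).1
      have h2 : ψ (g y) = y := (hr₁ y hy.1).1
      rw [← h1, ← h2, hgxy]
    -- f '' V = ball a R
    have hfV : f '' V = Metric.ball a R := by
      apply Set.Subset.antisymm
      · rintro _ ⟨z, hz, rfl⟩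
        rw [hf_eq z hz]
        exact ((hmbi (g z)).mp hz.2).2
      · intro v hv
        have hv0 : v ≠ 0 := by
          intro h0
          rw [h0, Metric.mem_ball, Complex.dist_eq, zero_sub, norm_neg, ha_abs] at hv
          linarith
        have hvinv : v⁻¹ ∈ Metric.ball b s := by
          rw [hmbi]
          exact ⟨inv_ne_zero hv0, by rw [inv_inv]; exact hv⟩
        rw [← hgV] at hvinv
        obtain ⟨z, hzV, hgz⟩ := hvinv
        exact ⟨z, hzV, by rw [hf_eq z hzV, hgz, inv_inv]⟩
    exact ⟨a, V, hV_open, hVD, hinj, hfV⟩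
  refine ⟨main, fun R hR => ?_⟩
  obtain ⟨a, V, _, hVD, _, hfV⟩ := main R hR
  exact ⟨a, by rw [← hfV]; exact Set.image_mono hVD⟩
end

section
/- Let p ∈ (0,1) and let f be analytic on 𝔻 ∖ {p}, where 𝔻 = {z ∈ ℂ : |z| < 1}, with a simple pole at p, i.e. there exists an analytic function h on 𝔻 with h(p) ≠ 0 such that f(z) = h(z)/(z − p) for all z ∈ 𝔻 ∖ {p}, and suppose f'(0) = 1. Then for every R > 0 there exist a point a ∈ ℂ and an open set V ⊆ 𝔻 ∖ {p} such that f is injective on V and f(V) = {w ∈ ℂ : |w − a| < R}. -/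
open Complex Metric Set

/-- Bloch part of Theorem 2.4: for `p ∈ (0,1)`, if `f` is analytic on `𝔻 ∖ {p}` with a
simple pole at `p` and `f'(0) = 1`, then the image of `f` contains schlicht disks of
every radius. -/
theorem schlicht_disks_unbounded_of_interior_pole
    (p : ℝ) (hp : p ∈ Set.Ioo (0:ℝ) 1)
    (f : ℂ → ℂ) (hf : AnalyticOnNhd ℂ f (Metric.ball (0:ℂ) 1 \ {(p:ℂ)}))
    (h : ℂ → ℂ) (hh : AnalyticOnNhd ℂ h (Metric.ball (0:ℂ) 1)) (hhp : h (p:ℂ) ≠ 0)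
    (hfh : ∀ z ∈ Metric.ball (0:ℂ) 1 \ {(p:ℂ)}, f z = h z / (z - (p:ℂ)))
    (hf0 : deriv f 0 = 1) :
    ∀ R > 0, ∃ (a : ℂ) (V : Set ℂ), IsOpen V ∧ V ⊆ Metric.ball (0:ℂ) 1 \ {(p:ℂ)} ∧
      Set.InjOn f V ∧ f '' V = Metric.ball a R := by
  intro R hR
  obtain ⟨hp0, hp1⟩ := hp
  have hpmem : (p:ℂ) ∈ Metric.ball (0:ℂ) 1 := by
    simp [Complex.dist_eq, Complex.norm_real, abs_of_pos hp0, hp1]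
  set g : ℂ → ℂ := fun z => (z - (p:ℂ)) / h z with hg_def
  have hhap : AnalyticAt ℂ h (p:ℂ) := hh _ hpmem
  have hga : AnalyticAt ℂ g (p:ℂ) :=
    (analyticAt_id.sub analyticAt_const).div hhap hhp
  have hgp : g (p:ℂ) = 0 := by simp [hg_def]
  have hder : HasDerivAt g ((h (p:ℂ))⁻¹) (p:ℂ) := by
    have h1 : HasDerivAt (fun z : ℂ => z - (p:ℂ)) 1 (p:ℂ) := (hasDerivAt_id _).sub_const _
    have h2 : HasDerivAt h (deriv h (p:ℂ)) (p:ℂ) := hhap.differentiableAt.hasDerivAt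
    have h3 : HasDerivAt g _ (p:ℂ) := h1.div h2 hhp
    convert h3 using 1
    simp only [sub_self, zero_mul, sub_zero, one_mul]
    rw [sq, ← div_div, div_self hhp, one_div]
  obtain ⟨ps, hps⟩ := hga
  have hstrict : HasStrictDerivAt g (deriv g (p:ℂ)) (p:ℂ) := by
    have := hps.hasStrictDerivAt
    rwa [← hps.deriv] at this
  have hd0 : deriv g (p:ℂ) ≠ 0 := by
    rw [hder.deriv]; exact inv_ne_zero hhp
  set φ := (hstrict.hasStrictFDerivAt_equiv hd0).toOpenPartialHomeomorph g with hφ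
  have hφcoe : (φ : ℂ → ℂ) = g := rfl
  have hpsrc : (p:ℂ) ∈ φ.source :=
    (hstrict.hasStrictFDerivAt_equiv hd0).mem_toOpenPartialHomeomorph_source
  -- open set where h ≠ 0
  obtain ⟨U, hU1, hU2, hU3⟩ := _root_.eventually_nhds_iff.1 (hhap.continuousAt.eventually_ne hhp)
  set W : Set ℂ := φ.source ∩ Metric.ball (0:ℂ) 1 ∩ U with hW_def
  have hWopen : IsOpen W := (φ.open_source.inter isOpen_ball).inter hU2
  have hpW : (p:ℂ) ∈ W := ⟨⟨hpsrc, hpmem⟩, hU3⟩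
  have hWsrc : W ⊆ φ.source := fun z hz => hz.1.1
  have hWball : W ⊆ Metric.ball (0:ℂ) 1 := fun z hz => hz.1.2
  have hWh : ∀ z ∈ W, h z ≠ 0 := fun z hz => hU1 z hz.2
  have hgWopen : IsOpen (g '' W) := by
    have := φ.isOpen_image_of_subset_source hWopen hWsrc
    rwa [hφcoe] at this
  have h0mem : (0:ℂ) ∈ g '' W := ⟨(p:ℂ), hpW, hgp⟩
  obtain ⟨ε, hε, hball⟩ := Metric.isOpen_iff.1 hgWopen 0 h0mem
  set M : ℝ := ε⁻¹ with hM_def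
  have hM : 0 < M := inv_pos.2 hε
  set a : ℂ := ((M + R : ℝ) : ℂ) with ha_def
  have haabs : ‖a‖ = M + R := by
    rw [ha_def, Complex.norm_real, Real.norm_eq_abs, abs_of_pos (by linarith)]
  -- every u in ball a R has |u| > M
  have hbig : ∀ u ∈ Metric.ball a R, M < ‖u‖ := by
    intro u hu
    have : ‖a - u‖ < R := by
      rw [← Complex.dist_eq, dist_comm]; exact Metric.mem_ball.1 hu
    have h4 : ‖a‖ ≤ ‖a - u‖ + ‖u‖ := by
      simpa using norm_add_le (a - u) u
    rw [haabs] at h4; linarith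
  -- the open set S
  set S : Set ℂ := {0}ᶜ ∩ Inv.inv ⁻¹' (Metric.ball a R) with hS_def
  have hSopen : IsOpen S :=
    continuousOn_inv₀.isOpen_inter_preimage isOpen_compl_singleton isOpen_ball
  set V : Set ℂ := W ∩ g ⁻¹' S with hV_def
  have hgcont : ContinuousOn g W := by
    intro z hz
    have : AnalyticAt ℂ g z :=
      (analyticAt_id.sub analyticAt_const).div (hh z (hWball hz)) (hWh z hz)
    exact this.continuousAt.continuousWithinAt
  have hVopen : IsOpen V := hgcont.isOpen_inter_preimage hWopen hSopen
  have hVnep : ∀ z ∈ V, z ≠ (p:ℂ) := by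
    intro z hz hzp
    have : g z ≠ 0 := hz.2.1
    rw [hzp, hgp] at this; exact this rfl
  have hVsub : V ⊆ Metric.ball (0:ℂ) 1 \ {(p:ℂ)} := fun z hz =>
    ⟨hWball hz.1, hVnep z hz⟩
  have hfV : ∀ z ∈ V, f z = (g z)⁻¹ := by
    intro z hz
    rw [hfh z (hVsub hz), hg_def]
    simp [inv_div]
  have hginj : Set.InjOn g W := by
    have := φ.injOn
    rw [hφcoe] at this
    exact this.mono hWsrc
  refine ⟨a, V, hVopen, hVsub, ?_, ?_⟩
  · intro z1 hz1 z2 hz2 hfz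
    rw [hfV z1 hz1, hfV z2 hz2] at hfz
    exact hginj hz1.1 hz2.1 (inv_injective hfz)
  · ext u
    constructor
    · rintro ⟨z, hz, rfl⟩
      rw [hfV z hz]
      exact hz.2.2
    · intro hu
      have huM : M < ‖u‖ := hbig u hu
      have hune : u ≠ 0 := by
        intro h0; rw [h0] at huM; simp at huM; linarith
      have huinv : u⁻¹ ∈ Metric.ball (0:ℂ) ε := by
        rw [Metric.mem_ball, Complex.dist_eq, sub_zero, norm_inv]
        rw [← inv_inv ε]
        exact inv_strictAnti₀ hM huM
      obtain ⟨z, hzW, hgz⟩ := hball huinv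
      have hgzne : g z ≠ 0 := by rw [hgz]; exact inv_ne_zero hune
      have hzV : z ∈ V := by
        refine ⟨hzW, hgzne, ?_⟩
        show (g z)⁻¹ ∈ Metric.ball a R
        rw [hgz, inv_inv]; exact hu
      exact ⟨z, hzV, by rw [hfV z hzV, hgz, inv_inv]⟩
end

section
/- Let p ∈ (0,1) and let f be analytic on 𝔻 ∖ {p}, where 𝔻 = {z ∈ ℂ : |z| < 1}, with a simple pole at p, i.e. there exists an analytic function h on 𝔻 with h(p) ≠ 0 such that f(z) = h(z)/(z − p) for all z ∈ 𝔻 ∖ {p}, and suppose f'(0) = 1. Then for every R > 0 there exists a point a ∈ ℂ such that {w ∈ ℂ : |w − a| < R} ⊆ f(𝔻 ∖ {p}). -/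
open Complex Metric Set

/-- Landau part of Theorem 2.4: for `p ∈ (0,1)`, if `f` is analytic on `𝔻 ∖ {p}` with a
simple pole at `p` and `f'(0) = 1`, then the image `f(𝔻 ∖ {p})` contains disks of every
radius. -/
theorem disks_unbounded_of_interior_pole
    (p : ℝ) (hp : p ∈ Set.Ioo (0:ℝ) 1)
    (f : ℂ → ℂ) (hf : AnalyticOnNhd ℂ f (Metric.ball (0:ℂ) 1 \ {(p:ℂ)}))
    (h : ℂ → ℂ) (hh : AnalyticOnNhd ℂ h (Metric.ball (0:ℂ) 1)) (hhp : h (p:ℂ) ≠ 0)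
    (hfh : ∀ z ∈ Metric.ball (0:ℂ) 1 \ {(p:ℂ)}, f z = h z / (z - (p:ℂ)))
    (hf0 : deriv f 0 = 1) :
    ∀ R > 0, ∃ a : ℂ, Metric.ball a R ⊆ f '' (Metric.ball (0:ℂ) 1 \ {(p:ℂ)}) := by
  intro R hR
  obtain ⟨hp0, hp1⟩ := hp
  have hpmem : (p:ℂ) ∈ Metric.ball (0:ℂ) 1 := by
    simp [Complex.norm_real, abs_of_pos hp0, hp1]
  set g : ℂ → ℂ := fun z => (z - (p:ℂ)) / h z with hg
  have hga : AnalyticAt ℂ g (p:ℂ) :=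
    AnalyticAt.div (analyticAt_id.sub analyticAt_const) (hh _ hpmem) hhp
  have hgp : g (p:ℂ) = 0 := by simp [hg]
  have hhne : ∀ᶠ z in nhds (p:ℂ), h z ≠ 0 :=
    (hh _ hpmem).continuousAt.eventually_ne hhp
  have hnonconst : ¬ ∀ᶠ z in nhds (p:ℂ), g z = g (p:ℂ) := by
    intro hc
    have hbad : ∀ᶠ z in nhdsWithin (p:ℂ) {(p:ℂ)}ᶜ, False := by
      filter_upwards [hc.filter_mono nhdsWithin_le_nhds,
        hhne.filter_mono nhdsWithin_le_nhds, self_mem_nhdsWithin] with z h1 h2 h3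
      rw [hgp, hg] at h1
      simp only [div_eq_zero_iff, sub_eq_zero] at h1
      rcases h1 with h1 | h1
      · exact h3 h1
      · exact h2 h1
    exact hbad.exists.elim fun _ hF => hF
  have hmap := (hga.eventually_constant_or_nhds_le_map_nhds).resolve_left hnonconst
  rw [hgp] at hmap
  -- the good neighborhood
  set U : Set ℂ := {z | h z ≠ 0} ∩ Metric.ball (0:ℂ) 1 with hU
  have hUmem : U ∈ nhds (p:ℂ) :=
    Filter.inter_mem hhne (Metric.isOpen_ball.mem_nhds hpmem)
  have himg : g '' U ∈ nhds (0:ℂ) := by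
    apply hmap
    exact Filter.mem_map.2 (Filter.mem_of_superset hUmem (Set.subset_preimage_image g U))
  obtain ⟨ε, hε, hball⟩ := Metric.mem_nhds_iff.1 himg
  refine ⟨((1/ε + R : ℝ) : ℂ), fun w hw => ?_⟩
  have hεR : (0:ℝ) < 1/ε + R := by positivity
  have habsa : ‖((1/ε + R : ℝ) : ℂ)‖ = 1/ε + R := by
    rw [Complex.norm_real, Real.norm_eq_abs, abs_of_pos hεR]
  have hwabs : 1/ε < ‖w‖ := by
    have h1 : ‖w - ((1/ε + R : ℝ) : ℂ)‖ < R := by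
      simpa [Complex.dist_eq] using hw
    have h2 : ‖((1/ε + R : ℝ) : ℂ)‖ ≤
        ‖((1/ε + R : ℝ) : ℂ) - w‖ + ‖w‖ := by
      simpa using norm_add_le (((1/ε + R : ℝ) : ℂ) - w) w
    have h3 : ‖((1/ε + R : ℝ) : ℂ) - w‖ = ‖w - ((1/ε + R : ℝ) : ℂ)‖ :=
      norm_sub_rev _ _
    rw [habsa, h3] at h2
    linarith
  have hw0 : w ≠ 0 := by
    intro hw0
    rw [hw0] at hwabs
    simp at hwabs
    have : (0:ℝ) < 1/ε := by positivity
    linarith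
  have hvin : w⁻¹ ∈ Metric.ball (0:ℂ) ε := by
    simp only [Metric.mem_ball, Complex.dist_eq, sub_zero, map_inv₀, norm_inv]
    exact inv_lt_of_inv_lt₀ hε (by rwa [one_div] at hwabs)
  obtain ⟨z, hzU, hgz⟩ := hball hvin
  obtain ⟨hzh, hzb⟩ := hzU
  have hzp : z ≠ (p:ℂ) := by
    intro hzp
    rw [hzp, hgp] at hgz
    exact hw0 (by simpa using hgz.symm)
  refine ⟨z, ⟨hzb, hzp⟩, ?_⟩
  rw [hfh z ⟨hzb, hzp⟩]
  have hzpne : z - (p:ℂ) ≠ 0 := sub_ne_zero.2 hzp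
  have hhz : h z ≠ 0 := hzh
  rw [hg] at hgz
  simp only at hgz
  field_simp [hhz, hzpne, hw0] at hgz ⊢
  linear_combination -hgz
end

section
/- Let p ∈ (0,1) and let f be analytic and injective on 𝔻 ∖ {p}, where 𝔻 = {z ∈ ℂ : |z| < 1}, with a simple pole at p (i.e. there exists an analytic function h on 𝔻 with h(p) ≠ 0 such that f(z) = h(z)/(z − p) on 𝔻 ∖ {p}), and suppose f(0) = 0 and f'(0) = 1. Then for every R > 0 there exist a point a ∈ ℂ and an open set V ⊆ 𝔻 ∖ {p} such that f is injective on V and f(V) = {w ∈ ℂ : |w − a| < R}; in particular f(𝔻 ∖ {p}) contains disks of arbitrarily large radius. -/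
open Complex Metric Set Topology Filter

/-- Section 2 of the paper: for `p ∈ (0,1)` and `f ∈ 𝓢(p)` (univalent on `𝔻 ∖ {p}` with a
simple pole at `p`, `f(0) = 0`, `f'(0) = 1`), the image of `f` contains schlicht disks of
every radius; in particular it contains disks of arbitrarily large radius. -/
theorem schlicht_disks_unbounded_of_univalent_interior_pole
    (p : ℝ) (hp : p ∈ Set.Ioo (0:ℝ) 1)
    (f : ℂ → ℂ) (hf : AnalyticOnNhd ℂ f (Metric.ball (0:ℂ) 1 \ {(p:ℂ)}))
    (hinj : Set.InjOn f (Metric.ball (0:ℂ) 1 \ {(p:ℂ)}))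
    (h : ℂ → ℂ) (hh : AnalyticOnNhd ℂ h (Metric.ball (0:ℂ) 1)) (hhp : h (p:ℂ) ≠ 0)
    (hfh : ∀ z ∈ Metric.ball (0:ℂ) 1 \ {(p:ℂ)}, f z = h z / (z - (p:ℂ)))
    (hf00 : f 0 = 0) (hf0 : deriv f 0 = 1) :
    ∀ R > 0, (∃ (a : ℂ) (V : Set ℂ), IsOpen V ∧ V ⊆ Metric.ball (0:ℂ) 1 \ {(p:ℂ)} ∧
      Set.InjOn f V ∧ f '' V = Metric.ball a R) ∧
      (∃ a : ℂ, Metric.ball a R ⊆ f '' (Metric.ball (0:ℂ) 1 \ {(p:ℂ)})) := by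
  -- p lies in the unit ball
  have hpmem : (p:ℂ) ∈ Metric.ball (0:ℂ) 1 := by
    simp [Complex.norm_real, Real.norm_eq_abs, abs_of_pos hp.1, hp.2]
  -- the auxiliary function g = (z - p) / h z, analytic at p with nonzero derivative
  set g : ℂ → ℂ := fun z => (z - (p:ℂ)) / h z with hg
  have hhA : AnalyticAt ℂ h (p:ℂ) := hh _ hpmem
  have hgA : AnalyticAt ℂ g (p:ℂ) := by
    exact ((analyticAt_id.sub analyticAt_const).div hhA hhp)
  -- g has nonzero strict derivative at p
  have hgderiv : HasDerivAt g ((h (p:ℂ))⁻¹) (p:ℂ) := by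
    have h1 : HasDerivAt (fun z : ℂ => z - (p:ℂ)) 1 (p:ℂ) :=
      (hasDerivAt_id _).sub_const _
    have h2 : HasDerivAt h (deriv h (p:ℂ)) (p:ℂ) := hhA.differentiableAt.hasDerivAt
    have h3 := h1.div h2 hhp
    have : (1 * h (p:ℂ) - ((p:ℂ) - (p:ℂ)) * deriv h (p:ℂ)) / h (p:ℂ) ^ 2 = (h (p:ℂ))⁻¹ := by
      field_simp
      ring
    rwa [this] at h3
  have hgstrict : HasStrictDerivAt g ((h (p:ℂ))⁻¹) (p:ℂ) := by
    have := (hgA.contDiffAt (n := 1)).hasStrictDerivAt one_ne_zero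
    have hd : deriv g (p:ℂ) = (h (p:ℂ))⁻¹ := hgderiv.deriv
    rwa [hd] at this
  have hgp : g (p:ℂ) = 0 := by simp [hg]
  have hmap : Filter.map g (𝓝 (p:ℂ)) = 𝓝 (0:ℂ) := by
    have := hgstrict.map_nhds_eq (inv_ne_zero hhp)
    rwa [hgp] at this
  -- the image of the unit ball under g is a neighborhood of 0
  have hball : Metric.ball (0:ℂ) 1 ∈ 𝓝 (p:ℂ) :=
    Metric.isOpen_ball.mem_nhds hpmem
  have himg : g '' Metric.ball (0:ℂ) 1 ∈ 𝓝 (0:ℂ) := by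
    rw [← hmap]; exact Filter.image_mem_map hball
  obtain ⟨ε, hε, hεsub⟩ := Metric.mem_nhds_iff.1 himg
  -- key: every w with |w| > 1/ε is in the image of f
  have key : ∀ w : ℂ, (1/ε : ℝ) < ‖w‖ →
      w ∈ f '' (Metric.ball (0:ℂ) 1 \ {(p:ℂ)}) := by
    intro w hw
    have hwpos : (0:ℝ) < ‖w‖ := lt_trans (by positivity) hw
    have hw0 : w ≠ 0 := by
      intro h0; rw [h0] at hwpos; simp at hwpos
    have hinvmem : w⁻¹ ∈ Metric.ball (0:ℂ) ε := by
      rw [Metric.mem_ball, dist_zero_right]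
      rw [norm_inv]
      rw [inv_lt_comm₀ (by simpa using hwpos) hε]
      simpa [one_div] using hw
    obtain ⟨z, hz, hgz⟩ := hεsub hinvmem
    have hinvne : w⁻¹ ≠ 0 := inv_ne_zero hw0
    have hhz : h z ≠ 0 := by
      intro h0
      rw [← hgz, hg] at hinvne
      simp [h0] at hinvne
    have hzp : z ≠ (p:ℂ) := by
      intro h0
      rw [← hgz, hg, h0] at hinvne
      simp at hinvne
    refine ⟨z, ⟨hz, hzp⟩, ?_⟩
    have hzsub : z - (p:ℂ) ≠ 0 := sub_ne_zero.2 hzp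
    have : (z - (p:ℂ)) / h z = w⁻¹ := hgz
    rw [hfh z ⟨hz, hzp⟩]
    field_simp at this ⊢
    linear_combination -this
  intro R hR
  -- choose a far from the origin
  set a : ℂ := ((1/ε + R + 1 : ℝ) : ℂ) with ha
  have hsub : Metric.ball a R ⊆ f '' (Metric.ball (0:ℂ) 1 \ {(p:ℂ)}) := by
    intro w hwball
    apply key
    have habs : ‖a‖ = 1/ε + R + 1 := by
      rw [ha, Complex.norm_real, Real.norm_eq_abs, abs_of_pos]
      positivity
    have hdist : ‖w - a‖ < R := by
      rw [Metric.mem_ball] at hwball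
      simpa [Complex.dist_eq] using hwball
    have h1 : ‖a‖ - ‖w - a‖ ≤ ‖w‖ := by
      have h2 : ‖a - w‖ = ‖w - a‖ := by
        rw [norm_sub_rev]
      have h3 := norm_sub_norm_le a w
      rw [h2] at h3
      linarith
    calc (1/ε : ℝ) < 1/ε + R + 1 - R := by linarith
      _ ≤ ‖a‖ - ‖w - a‖ := by rw [habs]; linarith
      _ ≤ ‖w‖ := h1
  constructor
  · -- the schlicht disk
    refine ⟨a, (Metric.ball (0:ℂ) 1 \ {(p:ℂ)}) ∩ f ⁻¹' (Metric.ball a R), ?_, inter_subset_left,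
      hinj.mono inter_subset_left, ?_⟩
    · -- openness
      rw [isOpen_iff_mem_nhds]
      rintro z ⟨hzD, hzpre⟩
      have hDopen : IsOpen (Metric.ball (0:ℂ) 1 \ {(p:ℂ)}) :=
        Metric.isOpen_ball.sdiff isClosed_singleton
      have hcont : ContinuousAt f z := (hf z hzD).continuousAt
      exact Filter.inter_mem (hDopen.mem_nhds hzD)
        (hcont (Metric.isOpen_ball.mem_nhds hzpre))
    · apply Set.Subset.antisymm
      · rintro w ⟨z, ⟨hzD, hzpre⟩, rfl⟩
        exact hzpre
      · intro w hw
        obtain ⟨z, hzD, rfl⟩ := hsub hw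
        exact ⟨z, ⟨hzD, hw⟩, rfl⟩
  · exact ⟨a, hsub⟩
end

section
/- Let g be analytic and injective on the punctured unit disk 𝔻* = {z ∈ ℂ : 0 < |z| < 1}, and suppose that z ↦ g(z) − 1/z extends to an analytic function on the full unit disk 𝔻 (so g has a simple pole at 0 with residue 1). Then for every R > 0 there exist a point a ∈ ℂ and an open set V ⊆ 𝔻* such that g is injective on V and g(V) = {w ∈ ℂ : |w − a| < R}. -/
open Complex Metric Set Filter Topology

/-- Section 2.1 of the paper: for `g ∈ Σ` (univalent on the punctured unit disk `𝔻*` with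
a simple pole at the origin with residue `1`), the image `g(𝔻*)` contains schlicht disks
of every radius. -/
theorem schlicht_disks_unbounded_of_class_sigma
    (g : ℂ → ℂ) (hg : AnalyticOnNhd ℂ g (Metric.ball (0:ℂ) 1 \ {0}))
    (hinj : Set.InjOn g (Metric.ball (0:ℂ) 1 \ {0}))
    (G : ℂ → ℂ) (hG : AnalyticOnNhd ℂ G (Metric.ball (0:ℂ) 1))
    (hgG : ∀ z ∈ Metric.ball (0:ℂ) 1 \ {0}, g z = z⁻¹ + G z) :
    ∀ R > 0, ∃ (a : ℂ) (V : Set ℂ), IsOpen V ∧ V ⊆ Metric.ball (0:ℂ) 1 \ {0} ∧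
      Set.InjOn g V ∧ g '' V = Metric.ball a R := by
  intro R hR
  set φ : ℂ → ℂ := fun z => 1 + z * G z with hφdef
  set h : ℂ → ℂ := fun z => z * (φ z)⁻¹ with hhdef
  have hG0 : AnalyticAt ℂ G 0 := hG 0 (by simp)
  have hφa : AnalyticAt ℂ φ 0 := analyticAt_const.add (analyticAt_id.mul hG0)
  have hφ0 : φ 0 = 1 := by simp [hφdef]
  have hha : AnalyticAt ℂ h 0 := analyticAt_id.mul (hφa.inv (by simp [hφ0]))
  have hh0 : h 0 = 0 := by simp [hhdef]
  -- key algebra: for z ≠ 0 in the disk, g z = (h z)⁻¹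
  have hginv : ∀ z ∈ Metric.ball (0:ℂ) 1 \ {0}, g z = (h z)⁻¹ := by
    intro z hz
    have hz0 : z ≠ 0 := hz.2
    rw [hgG z hz]
    simp only [hhdef, hφdef, mul_inv_rev, inv_inv]
    field_simp
  -- open mapping for h at 0
  have hmap : 𝓝 (0:ℂ) ≤ Filter.map h (𝓝 0) := by
    rcases hha.eventually_constant_or_nhds_le_map_nhds with hc | hm
    · exfalso
      have hφne : ∀ᶠ z in 𝓝 (0:ℂ), φ z ≠ 0 :=
        hφa.continuousAt.eventually_ne (by simp [hφ0])
      have hz0 : ∀ᶠ z in 𝓝 (0:ℂ), z = 0 := by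
        filter_upwards [hc, hφne] with z hz hφz
        rw [hh0] at hz
        rcases mul_eq_zero.mp hz with h1 | h1
        · exact h1
        · exact absurd (inv_eq_zero.mp h1) hφz
      have : ∀ᶠ z in 𝓝[≠] (0:ℂ), z = 0 := hz0.filter_mono nhdsWithin_le_nhds
      obtain ⟨z, hz1, hz2⟩ := (this.and (eventually_mem_nhdsWithin)).exists
      exact hz2 hz1
    · rwa [hh0] at hm
  have himg : h '' Metric.ball 0 1 ∈ 𝓝 (0:ℂ) :=
    hmap (Filter.image_mem_map (Metric.ball_mem_nhds 0 one_pos))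
  obtain ⟨ε, hε, hεsub⟩ := Metric.mem_nhds_iff.mp himg
  -- the center
  set a : ℂ := ((ε⁻¹ + R + 1 : ℝ) : ℂ) with hadef
  have haabs : ‖a‖ = ε⁻¹ + R + 1 := by
    rw [hadef, Complex.norm_real, Real.norm_eq_abs, abs_of_pos]
    positivity
  -- every point of ball a R is hit by g at some z in the punctured disk
  have hsurj : ∀ w ∈ Metric.ball a R, ∃ z ∈ Metric.ball (0:ℂ) 1 \ {0}, g z = w := by
    intro w hw
    have hwa : ‖w - a‖ < R := by
      simpa [Complex.dist_eq] using hw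
    have hwlarge : ε⁻¹ + 1 ≤ ‖w‖ := by
      have h1 : ‖a‖ - ‖w‖ ≤ ‖w - a‖ := by
        have := abs_norm_sub_norm_le a w
        have h2 : ‖a‖ - ‖w‖ ≤ |‖a‖ - ‖w‖| :=
          le_abs_self _
        rw [norm_sub_rev a w] at this
        linarith
      nlinarith [haabs]
    have hwpos : (0:ℝ) < ‖w‖ := lt_of_lt_of_le (by positivity) hwlarge
    have hw0 : w ≠ 0 := by
      intro hw0; rw [hw0] at hwpos; simp at hwpos
    have hwinv : w⁻¹ ∈ Metric.ball (0:ℂ) ε := by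
      rw [Metric.mem_ball, dist_zero_right]
      rw [norm_inv]
      have h1 : ε⁻¹ < ‖w‖ := lt_of_lt_of_le (by linarith) hwlarge
      calc ‖w‖⁻¹ < (ε⁻¹)⁻¹ := by
            apply inv_strictAnti₀ (by positivity) h1
        _ = ε := inv_inv ε
    obtain ⟨z, hz1, hz2⟩ := hεsub hwinv
    have hz0 : z ≠ 0 := by
      intro hz0
      rw [hz0, hh0] at hz2
      exact hw0 (by simpa using congrArg (·⁻¹) hz2.symm)
    have hzmem : z ∈ Metric.ball (0:ℂ) 1 \ {0} := ⟨hz1, hz0⟩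
    refine ⟨z, hzmem, ?_⟩
    rw [hginv z hzmem, hz2, inv_inv]
  -- the set V
  have hdomopen : IsOpen (Metric.ball (0:ℂ) 1 \ {0}) :=
    isOpen_ball.sdiff isClosed_singleton
  refine ⟨a, (Metric.ball (0:ℂ) 1 \ {0}) ∩ g ⁻¹' (Metric.ball a R), ?_, inter_subset_left, ?_, ?_⟩
  · exact hg.continuousOn.isOpen_inter_preimage hdomopen isOpen_ball
  · exact hinj.mono inter_subset_left
  · apply Set.Subset.antisymm
    · rintro w ⟨z, ⟨_, hz2⟩, rfl⟩
      exact hz2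
    · intro w hw
      obtain ⟨z, hz1, hz2⟩ := hsurj w hw
      exact ⟨z, ⟨hz1, by simp [Set.mem_preimage, hz2, hw]⟩, hz2⟩
end

section
/- Let λ, μ ∈ ℂ be distinct points with 0 < |λ| ≤ 1 and 0 < |μ| ≤ 1, and let f be analytic on 𝔻 ∖ {λ, μ}, where 𝔻 = {z ∈ ℂ : |z| < 1}, with a simple pole at each of λ and μ: for each pole point c ∈ {λ, μ} there exist an open set U_c ⊆ ℂ containing c and an analytic function h_c on U_c with h_c(c) ≠ 0 such that f(z) = h_c(z)/(z − c) for all z ∈ (𝔻 ∩ U_c) ∖ {λ, μ}. Suppose f'(0) = 1. Then for every R > 0 there exist a point a ∈ ℂ and an open set V ⊆ 𝔻 ∖ {λ, μ} such that f is injective on V and f(V) = {w ∈ ℂ : |w − a| < R}. -/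
open Complex Metric Set


private lemma aux_dstar_facts (lam : ℂ) (h : ℂ → ℂ)
    (B ρ R N : ℝ)
    (hBdef : B = ‖(starRingEnd ℂ) lam * h lam‖)
    (hB : 0 < B) (hρ : 0 < ρ) (hR : 0 < R)
    (hNdef : N = 3 * R + 1 / ρ)
    (hN3R : 3 * R ≤ N) (hNR : 0 < N - R)
    (a : ℂ)
    (hadef : a = -(N : ℂ) * ((starRingEnd ℂ) lam * h lam) / (B : ℂ))
    (habsa : ‖a‖ = N) :
    ∀ w : ℂ, w⁻¹ ∈ Metric.ball a R → w ≠ 0 ∧ ‖w‖ < ρ ∧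
      (((starRingEnd ℂ) lam * h lam) * w).re ≤ -(B / 2) * ‖w‖ := by
  set β : ℂ := (starRingEnd ℂ) lam * h lam with hβdef
  intro w hw
  have hu : ‖w⁻¹ - a‖ < R := by
    rw [Metric.mem_ball, Complex.dist_eq] at hw; exact hw
  have hw0 : w ≠ 0 := by
    rintro rfl
    rw [inv_zero, zero_sub, norm_neg, habsa] at hu
    nlinarith
  set u : ℂ := w⁻¹ with hudef
  have hu0 : u ≠ 0 := inv_ne_zero hw0
  set m : ℝ := ‖u‖ with hmdef
  have hm0 : 0 < m := norm_pos_iff.mpr hu0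
  have hub : m ≤ N + R := by
    calc m = ‖(u - a) + a‖ := by ring_nf; rfl
    _ ≤ ‖u - a‖ + ‖a‖ := norm_add_le _ _
    _ ≤ N + R := by rw [habsa]; linarith
  have hlb : N - R < m := by
    have h1 : ‖a‖ ≤ ‖a - u‖ + ‖u‖ := by
      calc ‖a‖ = ‖(a - u) + u‖ := by ring_nf
      _ ≤ _ := norm_add_le _ _
    rw [habsa, norm_sub_rev] at h1
    linarith
  have hweq : w = u⁻¹ := (inv_inv w).symm
  have habsw : ‖w‖ = m⁻¹ := by rw [hweq, norm_inv]
  have hwρ : ‖w‖ < ρ := by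
    rw [habsw]
    have h1 : m⁻¹ < (N - R)⁻¹ := inv_strictAnti₀ hNR hlb
    have h2 : 1 / ρ ≤ N - R := by rw [hNdef]; nlinarith
    have h3 : (N - R)⁻¹ ≤ ρ := by
      rw [← one_div, div_le_iff₀ hNR]
      have : 1 / ρ * ρ = 1 := by field_simp
      nlinarith
    linarith
  refine ⟨hw0, hwρ, ?_⟩
  have hBC : (B : ℂ) ≠ 0 := by exact_mod_cast hB.ne'
  have h2 : β * (starRingEnd ℂ) a = ((-(N * B) : ℝ) : ℂ) := by
    rw [hadef, map_div₀, map_mul, map_neg, Complex.conj_ofReal, Complex.conj_ofReal]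
    have hc : β * (starRingEnd ℂ) β = ((Complex.normSq β : ℝ) : ℂ) := Complex.mul_conj β
    have hns : Complex.normSq β = B ^ 2 := by rw [Complex.normSq_eq_norm_sq, ← hBdef]
    calc β * (-↑N * (starRingEnd ℂ) β / ↑B) = -↑N * (β * (starRingEnd ℂ) β) / ↑B := by ring
      _ = -↑N * ((Complex.normSq β : ℝ) : ℂ) / ↑B := by rw [hc]
      _ = ((-(N * B) : ℝ) : ℂ) := by rw [hns]; push_cast; field_simp
  have h3 : (β * (starRingEnd ℂ) (u - a)).re ≤ B * R := by
    refine le_trans (Complex.re_le_norm _) ?_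
    rw [norm_mul, Complex.norm_conj, ← hBdef]
    nlinarith [norm_nonneg (u - a)]
  have key : (β * (starRingEnd ℂ) u).re ≤ -(B * (N - R)) := by
    have h1 : β * (starRingEnd ℂ) u = β * (starRingEnd ℂ) a + β * (starRingEnd ℂ) (u - a) := by
      rw [← mul_add, ← map_add]; ring_nf
    rw [h1, Complex.add_re, h2, Complex.ofReal_re]
    linarith
  have hβw : β * w = (β * (starRingEnd ℂ) u) * (((Complex.normSq u)⁻¹ : ℝ) : ℂ) := by
    rw [hweq, Complex.inv_def]; ring
  have hre : (β * w).re = (β * (starRingEnd ℂ) u).re * (Complex.normSq u)⁻¹ := by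
    rw [hβw, Complex.mul_re, Complex.ofReal_re, Complex.ofReal_im, mul_zero, sub_zero]
  have hns : Complex.normSq u = m ^ 2 := by rw [Complex.normSq_eq_norm_sq, hmdef]
  have hminv : 0 < m⁻¹ := inv_pos.mpr hm0
  have hmi : m * m⁻¹ = 1 := mul_inv_cancel₀ hm0.ne'
  have h2NR : m ≤ 2 * (N - R) := by nlinarith
  have hhalf : (1:ℝ)/2 ≤ (N - R) * m⁻¹ := by
    nlinarith [mul_le_mul_of_nonneg_right h2NR hminv.le]
  have hfin : -(B * (N - R)) * (m ^ 2)⁻¹ ≤ -(B / 2) * m⁻¹ := by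
    rw [show (m ^ 2)⁻¹ = m⁻¹ * m⁻¹ by rw [sq, mul_inv]]
    nlinarith [mul_nonneg (mul_nonneg hB.le hminv.le) (sub_nonneg.mpr hhalf)]
  rw [hre, hns, habsw]
  calc (β * (starRingEnd ℂ) u).re * (m ^ 2)⁻¹
      ≤ -(B * (N - R)) * (m ^ 2)⁻¹ := mul_le_mul_of_nonneg_right key (by positivity)
    _ ≤ -(B / 2) * m⁻¹ := hfin

private lemma aux_abs_lt_one (lam : ℂ) (h : ℂ → ℂ) (B H : ℝ)
    (hHdef : H = ‖h lam‖)
    (hB : 0 < B) (hH : 0 < H)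
    (hlam1 : ‖lam‖ ≤ 1)
    (z w : ℂ) (hw0 : w ≠ 0)
    (hE : ‖z - lam - w * h lam‖ ≤ B / 8 * ‖w‖)
    (hre : (((starRingEnd ℂ) lam * h lam) * w).re ≤ -(B / 2) * ‖w‖)
    (hwδ : ‖w‖ ≤ B / (8 * (H + B / 8) ^ 2)) :
    ‖z‖ < 1 := by
  set β : ℂ := (starRingEnd ℂ) lam * h lam with hβdef
  set E : ℂ := z - lam - w * h lam with hEdef
  set d : ℂ := z - lam with hddef
  set aw : ℝ := ‖w‖ with hawdef
  have haw : 0 < aw := norm_pos_iff.mpr hw0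
  have hzeq : z = lam + d := by rw [hddef]; ring
  have hdeq : d = w * h lam + E := by rw [hEdef, hddef]; ring
  have hns : Complex.normSq z = Complex.normSq lam + Complex.normSq d
      + 2 * (lam * (starRingEnd ℂ) d).re := by rw [hzeq, Complex.normSq_add]
  have hc1 : lam * (starRingEnd ℂ) (w * h lam) = (starRingEnd ℂ) (β * w) := by
    rw [hβdef]
    simp only [map_mul, Complex.conj_conj]
    ring
  have hre1 : (lam * (starRingEnd ℂ) (w * h lam)).re ≤ -(B / 2) * aw := by
    rw [hc1, Complex.conj_re]; exact hre
  have hre2 : (lam * (starRingEnd ℂ) E).re ≤ B / 8 * aw := by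
    refine le_trans (Complex.re_le_norm _) ?_
    rw [norm_mul, Complex.norm_conj]
    calc ‖lam‖ * ‖E‖ ≤ 1 * (B / 8 * aw) :=
          mul_le_mul hlam1 hE (norm_nonneg _) zero_le_one
      _ = B / 8 * aw := one_mul _
  have hred : (lam * (starRingEnd ℂ) d).re ≤ -(B / 2) * aw + B / 8 * aw := by
    have heq : lam * (starRingEnd ℂ) d
        = lam * (starRingEnd ℂ) (w * h lam) + lam * (starRingEnd ℂ) E := by
      rw [hdeq, map_add]; ring
    rw [heq, Complex.add_re]
    linarith
  have habsd : ‖d‖ ≤ (H + B / 8) * aw := by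
    rw [hdeq]
    calc ‖w * h lam + E‖ ≤ ‖w * h lam‖ + ‖E‖ :=
          norm_add_le _ _
      _ ≤ aw * H + B / 8 * aw := by
          rw [norm_mul, ← hHdef, ← hawdef]; linarith
      _ = (H + B / 8) * aw := by ring
  have hnsd : Complex.normSq d ≤ ((H + B / 8) * aw) ^ 2 := by
    rw [Complex.normSq_eq_norm_sq]
    exact pow_le_pow_left₀ (norm_nonneg _) habsd 2
  have hnslam : Complex.normSq lam ≤ 1 := by
    rw [Complex.normSq_eq_norm_sq]
    nlinarith [norm_nonneg lam]
  have hq : ((H + B / 8) * aw) ^ 2 ≤ B / 8 * aw := by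
    have h1 : (H + B / 8) ^ 2 * aw ≤ B / 8 := by
      have hp : (0:ℝ) < (H + B / 8) ^ 2 := by positivity
      have h2 := mul_le_mul_of_nonneg_left hwδ hp.le
      have h3 : (H + B / 8) ^ 2 * (B / (8 * (H + B / 8) ^ 2)) = B / 8 := by
        field_simp
      rw [h3] at h2
      exact h2
    nlinarith [haw.le]
  have hnsz : Complex.normSq z < 1 := by
    rw [hns]
    nlinarith
  have := Complex.sq_norm z
  nlinarith [norm_nonneg z]

set_option maxHeartbeats 1000000 in
/-- Theorem 3.2: for distinct `λ, μ ∈ closure(𝔻) ∖ {0}`, if `f` is analytic on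
`𝔻 ∖ {λ, μ}` with a simple pole at each of `λ` and `μ` and `f'(0) = 1`, then the image of
`f` contains schlicht disks of every radius. -/
theorem schlicht_disks_unbounded_of_two_poles
    (lam mu : ℂ) (hne : lam ≠ mu)
    (hlam : 0 < ‖lam‖ ∧ ‖lam‖ ≤ 1)
    (hmu : 0 < ‖mu‖ ∧ ‖mu‖ ≤ 1)
    (f : ℂ → ℂ) (hf : AnalyticOnNhd ℂ f (Metric.ball (0:ℂ) 1 \ {lam, mu}))
    (hpole : ∀ c ∈ ({lam, mu} : Set ℂ), ∃ (U : Set ℂ), IsOpen U ∧ c ∈ U ∧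
      ∃ h : ℂ → ℂ, AnalyticOnNhd ℂ h U ∧ h c ≠ 0 ∧
        ∀ z ∈ (Metric.ball (0:ℂ) 1 ∩ U) \ {lam, mu}, f z = h z / (z - c))
    (hf0 : deriv f 0 = 1) :
    ∀ R > 0, ∃ (a : ℂ) (V : Set ℂ), IsOpen V ∧ V ⊆ Metric.ball (0:ℂ) 1 \ {lam, mu} ∧
      Set.InjOn f V ∧ f '' V = Metric.ball a R := by
  intro R hR
  obtain ⟨U, hUo, hcU, h, hh, hhc, hfh⟩ := hpole lam (Set.mem_insert _ _)
  set F : ℂ → ℂ := fun z => (z - lam) * (h z)⁻¹ with hFdef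
  have hFan : AnalyticAt ℂ F lam :=
    (analyticAt_id.sub analyticAt_const).mul ((hh lam hcU).inv hhc)
  have hFd : HasDerivAt F (h lam)⁻¹ lam := by
    have h1 : HasDerivAt (fun z : ℂ => z - lam) 1 lam := (hasDerivAt_id lam).sub_const lam
    have h2 : HasDerivAt (fun z => (h z)⁻¹) (-(deriv h lam) / (h lam) ^ 2) lam :=
      ((hh lam hcU).differentiableAt.hasDerivAt).inv hhc
    have := h1.mul h2
    simp at this
    exact this
  have hF' : (h lam)⁻¹ ≠ 0 := inv_ne_zero hhc
  have hFs : HasStrictDerivAt F (h lam)⁻¹ lam := by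
    obtain ⟨p, hp⟩ := hFan
    have hs := hp.hasStrictDerivAt
    rwa [hp.hasDerivAt.unique hFd] at hs
  set φ : OpenPartialHomeomorph ℂ ℂ :=
    HasStrictFDerivAt.toOpenPartialHomeomorph F (hFs.hasStrictFDerivAt_equiv hF')
    with hφdef
  have φcoe : ⇑φ = F := HasStrictFDerivAt.toOpenPartialHomeomorph_coe _
  have hcsrc : lam ∈ φ.source := HasStrictFDerivAt.mem_toOpenPartialHomeomorph_source _
  have hFc : F lam = 0 := by simp [hFdef]
  have h0tgt : (0 : ℂ) ∈ φ.target := by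
    have := HasStrictFDerivAt.image_mem_toOpenPartialHomeomorph_target
      (hFs.hasStrictFDerivAt_equiv hF')
    rwa [hFc] at this
  have hG0 : φ.symm 0 = lam := by
    have := φ.left_inv hcsrc
    rwa [φcoe, hFc] at this
  have hGs : HasStrictDerivAt (⇑φ.symm) (h lam) 0 := by
    have h2 := HasStrictDerivAt.to_localInverse (hf := hFs) (hf' := hF')
    rw [hFc, inv_inv] at h2
    exact h2
  -- constants
  set B : ℝ := ‖(starRingEnd ℂ) lam * h lam‖ with hBdef
  have hB : 0 < B := by
    rw [hBdef, norm_mul, Complex.norm_conj]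
    exact mul_pos hlam.1 (norm_pos_iff.mpr hhc)
  set H : ℝ := ‖h lam‖ with hHdef
  have hH : 0 < H := norm_pos_iff.mpr hhc
  set δ₂ : ℝ := B / (8 * (H + B / 8) ^ 2) with hδ₂def
  have hδ₂ : 0 < δ₂ := by positivity
  -- little-o bound
  have hlit := hasDerivAt_iff_isLittleO.mp hGs.hasDerivAt
  have hev := hlit.def (show (0:ℝ) < B / 8 by positivity)
  obtain ⟨δ₁, hδ₁, hEb⟩ := Metric.eventually_nhds_iff.mp hev
  -- good neighborhood s₀
  set s₀ : Set ℂ := φ.source ∩ (U ∩ {z | h z ≠ 0}) ∩ Metric.ball lam (dist lam mu) with hs₀def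
  have hs₀o : IsOpen s₀ := by
    apply IsOpen.inter (IsOpen.inter φ.open_source ?_) isOpen_ball
    exact hh.continuousOn.isOpen_inter_preimage hUo isOpen_compl_singleton
  have hlams₀ : lam ∈ s₀ := by
    refine ⟨⟨hcsrc, hcU, hhc⟩, ?_⟩
    simp [Metric.mem_ball, dist_pos, hne]
  have hnhds : φ.target ∩ φ.symm ⁻¹' s₀ ∈ nhds (0:ℂ) := by
    refine Filter.inter_mem (φ.open_target.mem_nhds h0tgt) ?_
    exact (φ.continuousAt_symm h0tgt).preimage_mem_nhds (hs₀o.mem_nhds (hG0 ▸ hlams₀))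
  obtain ⟨ρ₁, hρ₁, hball₁⟩ := Metric.mem_nhds_iff.mp hnhds
  set ρ : ℝ := min ρ₁ (min δ₁ δ₂) with hρdef
  have hρ : 0 < ρ := lt_min hρ₁ (lt_min hδ₁ hδ₂)
  have hρρ₁ : ρ ≤ ρ₁ := min_le_left _ _
  have hρδ₁ : ρ ≤ δ₁ := le_trans (min_le_right _ _) (min_le_left _ _)
  have hρδ₂ : ρ ≤ δ₂ := le_trans (min_le_right _ _) (min_le_right _ _)
  set N : ℝ := 3 * R + 1 / ρ with hNdef
  have hN3R : 3 * R ≤ N := by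
    rw [hNdef]; nlinarith [one_div_pos.mpr hρ]
  have hNR : 0 < N - R := by nlinarith
  set a : ℂ := -(N : ℂ) * ((starRingEnd ℂ) lam * h lam) / (B : ℂ) with hadef
  have habsa : ‖a‖ = N := by
    have hN0 : (0:ℝ) < N := by nlinarith
    rw [hadef, norm_div, norm_mul]
    rw [show (-(N:ℂ)) = ((-N : ℝ) : ℂ) by push_cast; ring]
    rw [Complex.norm_real, Complex.norm_real, Real.norm_eq_abs, Real.norm_eq_abs, ← hBdef, abs_of_pos hB, abs_neg,
      abs_of_pos hN0]
    field_simp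
  -- the inverted disk
  set Dstar : Set ℂ := {w : ℂ | w⁻¹ ∈ Metric.ball a R} with hDdef
  have hDfacts : ∀ w ∈ Dstar, w ≠ 0 ∧ ‖w‖ < ρ ∧
      (((starRingEnd ℂ) lam * h lam) * w).re ≤ -(B / 2) * ‖w‖ := fun w hw =>
    aux_dstar_facts lam h B ρ R N hBdef hB hρ hR hNdef hN3R hNR a hadef habsa w hw
  -- Dstar is open and small
  have hDsub : Dstar ⊆ Metric.ball (0:ℂ) ρ := by
    intro w hw
    rw [Metric.mem_ball, Complex.dist_eq, sub_zero]
    exact (hDfacts w hw).2.1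
  have hDopen : IsOpen Dstar := by
    rw [isOpen_iff_mem_nhds]
    intro w hw
    have hw0 := (hDfacts w hw).1
    exact (continuousAt_inv₀ hw0).preimage_mem_nhds (isOpen_ball.mem_nhds hw)
  have hDtgt : Dstar ⊆ φ.target ∩ φ.symm ⁻¹' s₀ := by
    intro w hw
    apply hball₁
    exact Metric.ball_subset_ball hρρ₁ (hDsub hw)
  -- the key package for each w ∈ Dstar
  have hkey : ∀ w ∈ Dstar, φ.symm w ∈ φ.source ∧ F (φ.symm w) = w ∧
      φ.symm w ∈ (Metric.ball (0:ℂ) 1 ∩ U) \ {lam, mu} := by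
    intro w hw
    obtain ⟨hw0, hwρ, hre⟩ := hDfacts w hw
    have hwt : w ∈ φ.target := (hDtgt hw).1
    have hzs₀ : φ.symm w ∈ s₀ := (hDtgt hw).2
    set z : ℂ := φ.symm w with hzdef
    obtain ⟨⟨hzsrc, hzU, hzh⟩, hzball⟩ := hzs₀
    have hFz : F z = w := by
      have := φ.right_inv hwt
      rwa [φcoe] at this
    have hzlam : z ≠ lam := by
      intro hzl
      rw [hzl, hFc] at hFz
      exact hw0 hFz.symm
    have hzmu : z ≠ mu := by
      intro hzm
      rw [hzm] at hzball
      rw [Metric.mem_ball, dist_comm] at hzball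
      exact lt_irrefl _ hzball
    -- the estimate |z| < 1
    have hEw : ‖z - lam - w * h lam‖ ≤ B / 8 * ‖w‖ := by
      have hd : dist w 0 < δ₁ := by
        rw [Complex.dist_eq, sub_zero]; linarith
      have := hEb hd
      rw [hG0] at this
      simpa [smul_eq_mul] using this
    have hwδ : ‖w‖ ≤ δ₂ := le_of_lt (lt_of_lt_of_le hwρ hρδ₂)
    have habz : ‖z‖ < 1 := by
      refine aux_abs_lt_one lam h B H hHdef hB hH hlam.2 z w hw0 hEw hre ?_
      rw [← hδ₂def]
      exact hwδ
    refine ⟨hzsrc, hFz, ⟨?_, hzU⟩, ?_⟩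
    · rw [Metric.mem_ball, Complex.dist_eq, sub_zero]; exact habz
    · simp [Set.mem_insert_iff, hzlam, hzmu]
  -- the schlicht set
  refine ⟨a, φ.source ∩ φ ⁻¹' Dstar, φ.isOpen_inter_preimage hDopen, ?_, ?_, ?_⟩
  · -- V ⊆ 𝔻 \ {lam, mu}
    rintro z ⟨hzsrc, hzD⟩
    rw [Set.mem_preimage, φcoe] at hzD
    have hz : z = φ.symm (F z) := by
      have := φ.left_inv hzsrc
      rw [φcoe] at this
      exact this.symm
    obtain ⟨_, _, ⟨hb, _⟩, hnp⟩ := hkey (F z) hzD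
    rw [← hz] at hb hnp
    exact ⟨hb, hnp⟩
  · -- injectivity
    have hfeq : ∀ z ∈ φ.source ∩ φ ⁻¹' Dstar, f z = (F z)⁻¹ := by
      rintro z ⟨hzsrc, hzD⟩
      rw [Set.mem_preimage, φcoe] at hzD
      have hz : z = φ.symm (F z) := by
        have := φ.left_inv hzsrc
        rw [φcoe] at this
        exact this.symm
      obtain ⟨_, _, hzmem⟩ := hkey (F z) hzD
      rw [← hz] at hzmem
      rw [hfh z hzmem]
      show h z / (z - lam) = ((z - lam) * (h z)⁻¹)⁻¹
      rw [mul_inv, inv_inv, div_eq_mul_inv, mul_comm]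
    intro z1 h1 z2 h2 heq
    rw [hfeq z1 h1, hfeq z2 h2] at heq
    have hF12 : F z1 = F z2 := inv_injective heq
    have : φ z1 = φ z2 := by rw [φcoe]; exact hF12
    exact φ.injOn h1.1 h2.1 this
  · -- image
    have hfeq : ∀ z ∈ φ.source ∩ φ ⁻¹' Dstar, f z = (F z)⁻¹ := by
      rintro z ⟨hzsrc, hzD⟩
      rw [Set.mem_preimage, φcoe] at hzD
      have hz : z = φ.symm (F z) := by
        have := φ.left_inv hzsrc
        rw [φcoe] at this
        exact this.symm
      obtain ⟨_, _, hzmem⟩ := hkey (F z) hzD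
      rw [← hz] at hzmem
      rw [hfh z hzmem]
      show h z / (z - lam) = ((z - lam) * (h z)⁻¹)⁻¹
      rw [mul_inv, inv_inv, div_eq_mul_inv, mul_comm]
    ext u
    constructor
    · rintro ⟨z, hz, rfl⟩
      rw [hfeq z hz]
      have hzD : F z ∈ Dstar := by
        have := hz.2
        rwa [Set.mem_preimage, φcoe] at this
      exact hzD
    · intro hu
      have hu0 : u ≠ 0 := by
        rintro rfl
        rw [Metric.mem_ball, Complex.dist_eq, zero_sub, norm_neg, habsa] at hu
        nlinarith
      have hwD : u⁻¹ ∈ Dstar := by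
        rw [hDdef, Set.mem_setOf_eq, inv_inv]
        exact hu
      have hwt : u⁻¹ ∈ φ.target := (hDtgt hwD).1
      obtain ⟨hzsrc, hFz, _⟩ := hkey u⁻¹ hwD
      refine ⟨φ.symm u⁻¹, ⟨hzsrc, ?_⟩, ?_⟩
      · rw [Set.mem_preimage, φcoe, hFz]
        exact hwD
      · rw [hfeq (φ.symm u⁻¹) ⟨hzsrc, by rw [Set.mem_preimage, φcoe, hFz]; exact hwD⟩]
        rw [hFz, inv_inv]
end

section
/- Let λ, μ ∈ ℂ be distinct points with 0 < |λ| ≤ 1 and 0 < |μ| ≤ 1, and let f be analytic on 𝔻 ∖ {λ, μ}, where 𝔻 = {z ∈ ℂ : |z| < 1}, with a simple pole at each of λ and μ: for each pole point c ∈ {λ, μ} there exist an open set U_c ⊆ ℂ containing c and an analytic function h_c on U_c with h_c(c) ≠ 0 such that f(z) = h_c(z)/(z − c) for all z ∈ (𝔻 ∩ U_c) ∖ {λ, μ}. Suppose f'(0) = 1. Then for every R > 0 there exists a point a ∈ ℂ such that {w ∈ ℂ : |w − a| < R} ⊆ f(𝔻 ∖ {λ, μ}). -/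
open Complex Metric Set

set_option maxHeartbeats 1000000

/-- Corollary 3.3: for distinct `λ, μ ∈ closure(𝔻) ∖ {0}`, if `f` is analytic on
`𝔻 ∖ {λ, μ}` with a simple pole at each of `λ` and `μ` and `f'(0) = 1`, then the image
`f(𝔻 ∖ {λ, μ})` contains disks of every radius. -/
theorem disks_unbounded_of_two_poles
    (lam mu : ℂ) (hne : lam ≠ mu)
    (hlam : 0 < ‖lam‖ ∧ ‖lam‖ ≤ 1)
    (hmu : 0 < ‖mu‖ ∧ ‖mu‖ ≤ 1)
    (f : ℂ → ℂ) (hf : AnalyticOnNhd ℂ f (Metric.ball (0:ℂ) 1 \ {lam, mu}))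
    (hpole : ∀ c ∈ ({lam, mu} : Set ℂ), ∃ (U : Set ℂ), IsOpen U ∧ c ∈ U ∧
      ∃ h : ℂ → ℂ, AnalyticOnNhd ℂ h U ∧ h c ≠ 0 ∧
        ∀ z ∈ (Metric.ball (0:ℂ) 1 ∩ U) \ {lam, mu}, f z = h z / (z - c))
    (hf0 : deriv f 0 = 1) :
    ∀ R > 0, ∃ a : ℂ, Metric.ball a R ⊆ f '' (Metric.ball (0:ℂ) 1 \ {lam, mu}) := by
  obtain ⟨U, hUopen, hcU, h, hhan, hA0, hrep⟩ := hpole lam (by left; rfl)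
  set c : ℂ := lam with hcdef
  have hcabs : 0 < ‖c‖ := by exact hlam.1
  have hcabs1 : ‖c‖ ≤ 1 := by exact hlam.2
  have hAabs : 0 < ‖h c‖ := norm_pos_iff.mpr hA0
  set g : ℂ → ℂ := fun z => (z - c) / h z with hgdef
  have hgc : g c = 0 := by simp [hgdef]
  have hhs : HasStrictDerivAt h (deriv h c) c := (hhan c hcU).hasStrictFDerivAt.hasStrictDerivAt
  have hgd : HasStrictDerivAt g ((h c)⁻¹) c := by
    have := ((hasStrictDerivAt_id c).sub (hasStrictDerivAt_const c c)).div hhs hA0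
    simp only [sub_self, zero_mul, one_mul, sub_zero, id] at this
    refine this.congr_deriv ?_
    simp only [Pi.sub_apply, id, sub_self, zero_mul, sub_zero]
    rw [sq]; field_simp
  have hinv : ((h c)⁻¹ : ℂ) ≠ 0 := inv_ne_zero hA0
  set ψ := hgd.localInverse g ((h c)⁻¹) c hinv with hψdef
  have hψ0 : ψ 0 = c := by
    have := (hgd.hasStrictFDerivAt_equiv hinv).localInverse_apply_image
    rwa [hgc] at this
  have hψd : HasStrictDerivAt ψ (h c) 0 := by
    have := hgd.to_localInverse hinv
    rwa [hgc, inv_inv] at this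
  -- the three eventually-facts near 0
  have hev3 : ∀ᶠ w in nhds (0:ℂ), ‖ψ w - c - w * h c‖ ≤ ‖h c‖ / 8 * ‖w‖ := by
    have := (hasDerivAt_iff_isLittleO.mp hψd.hasDerivAt).def
      (by positivity : (0:ℝ) < ‖h c‖ / 8)
    filter_upwards [this] with w hw
    simpa [hψ0, smul_eq_mul, mul_comm] using hw
  have hev1 : ∀ᶠ w in nhds (0:ℂ), g (ψ w) = w := by
    have := (hgd.hasStrictFDerivAt_equiv hinv).eventually_right_inverse
    rwa [hgc] at this
  have hψc : Filter.Tendsto ψ (nhds 0) (nhds c) := by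
    have := (hgd.hasStrictFDerivAt_equiv hinv).localInverse_continuousAt
    rw [hgc] at this
    have h0 : ContinuousAt ψ 0 := this
    rw [show (c : ℂ) = ψ 0 from hψ0.symm]
    exact h0
  have hevc : ∀ᶠ z in nhds c, z ∈ U ∧ h z ≠ 0 ∧ z ≠ mu := by
    have h1 : ∀ᶠ z in nhds c, z ∈ U := hUopen.mem_nhds hcU
    have h2 : ∀ᶠ z in nhds c, h z ≠ 0 := (hhan c hcU).continuousAt.eventually_ne hA0
    have h3 : ∀ᶠ z in nhds c, z ≠ mu := eventually_ne_nhds hne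
    filter_upwards [h1, h2, h3] with z z1 z2 z3 using ⟨z1, z2, z3⟩
  have hev2 := hψc.eventually hevc
  have hev := (hev1.and hev2).and hev3
  rw [Metric.eventually_nhds_iff_ball] at hev
  obtain ⟨ε, hε, hball⟩ := hev
  -- main argument
  intro R hR
  set t : ℝ := min 1 (min (ε * ‖h c‖ / (2 * ‖c‖)) (‖h c‖ / (8 * R * ‖c‖))) with htdef
  have ht0 : 0 < t := lt_min one_pos (lt_min (by positivity) (by positivity))
  have ht1 : t ≤ 1 := min_le_left _ _
  set s : ℝ := t * ‖c‖ / ‖h c‖ with hsdef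
  have hs0 : 0 < s := by positivity
  have hsA : s * ‖h c‖ = t * ‖c‖ := by
    rw [hsdef, div_mul_cancel₀ _ (ne_of_gt hAabs)]
  have hs1 : 3 / 2 * s < ε := by
    have : t ≤ ε * ‖h c‖ / (2 * ‖c‖) := le_trans (min_le_right _ _) (min_le_left _ _)
    have hs2 : s ≤ ε / 2 := by
      rw [le_div_iff₀ (by positivity)] at this
      rw [hsdef, div_le_div_iff₀ hAabs (by norm_num : (0:ℝ) < 2)]
      nlinarith
    nlinarith
  have hs2 : 8 * R * s ≤ 1 := by
    have : t ≤ ‖h c‖ / (8 * R * ‖c‖) := le_trans (min_le_right _ _) (min_le_right _ _)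
    rw [le_div_iff₀ (by positivity)] at this
    rw [hsdef]
    rw [show 8 * R * (t * ‖c‖ / ‖h c‖) = t * (8 * R * ‖c‖) / ‖h c‖ by ring]
    rw [div_le_one hAabs]
    linarith
  set w₀ : ℂ := -(t : ℂ) * c / h c with hw₀def
  have hw₀ : ‖w₀‖ = s := by
    rw [hw₀def, hsdef]
    simp [norm_div, norm_mul, Complex.norm_real, Real.norm_eq_abs, _root_.abs_of_pos ht0]
  have hw₀0 : w₀ ≠ 0 := by
    intro hh; rw [hh, norm_zero] at hw₀; exact absurd hw₀.symm (ne_of_gt hs0)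
  have hkey : c + h c * w₀ = (1 - (t : ℂ)) * c := by
    rw [hw₀def]; field_simp; ring
  refine ⟨w₀⁻¹, fun v hv => ?_⟩
  rw [mem_ball] at hv
  rw [dist_eq_norm] at hv
  have hainv : ‖w₀⁻¹‖ = 1 / s := by rw [norm_inv, hw₀, one_div]
  have hRs : R ≤ 1 / (8 * s) := by
    rw [le_div_iff₀ (by positivity)]; linarith
  have hvlb : 1 / (2 * s) < ‖v‖ := by
    have h1 : ‖w₀⁻¹‖ - ‖v - w₀⁻¹‖ ≤ ‖v‖ := by
      have := norm_sub_norm_le w₀⁻¹ v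
      have h2 : ‖w₀⁻¹ - v‖ = ‖v - w₀⁻¹‖ := norm_sub_rev _ _
      linarith
    have : 1 / s - R < ‖v‖ := by rw [← hainv]; linarith
    have h8 : 1 / (8 * s) ≤ 1 / (2 * s) := by
      apply div_le_div_of_nonneg_left (by norm_num) (by positivity) (by linarith)
    have : 1 / s - 1 / (8 * s) < ‖v‖ + 0 := by linarith
    have heq : 1 / s - 1 / (8 * s) = 7 / (8 * s) := by field_simp; ring
    rw [heq] at this
    have : 1 / (2 * s) < 7 / (8 * s) := by
      rw [div_lt_div_iff₀ (by positivity) (by positivity)]; nlinarith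
    linarith
  have hv0 : v ≠ 0 := by
    intro hh; rw [hh, norm_zero] at hvlb
    have : (0:ℝ) < 1 / (2 * s) := by positivity
    linarith
  set w : ℂ := v⁻¹ with hwdef
  have hvinv : ‖v‖⁻¹ < 2 * s := by
    have h1 : ((2:ℝ) * s)⁻¹ < ‖v‖ := by rw [← one_div]; exact hvlb
    exact inv_lt_of_inv_lt₀ (by positivity) h1
  have hww₀ : ‖w - w₀‖ < s / 2 := by
    have hid : v⁻¹ - w₀ = -w₀ * (v - w₀⁻¹) * v⁻¹ := by field_simp; ring
    rw [hwdef, hid]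
    rw [norm_mul, norm_mul, norm_neg, hw₀, norm_inv]
    have hbound : s * ‖v - w₀⁻¹‖ * ‖v‖⁻¹ < s * R * (2 * s) := by
      have h1 : ‖v - w₀⁻¹‖ * ‖v‖⁻¹ < R * (2 * s) := by
        apply mul_lt_mul' (le_of_lt hv) hvinv (by positivity) hR
      calc s * ‖v - w₀⁻¹‖ * ‖v‖⁻¹ = s * (‖v - w₀⁻¹‖ * ‖v‖⁻¹) := by ring
        _ < s * (R * (2 * s)) := by exact (mul_lt_mul_iff_right₀ hs0).mpr h1
        _ = s * R * (2 * s) := by ring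
    have : s * R * (2 * s) ≤ s / 4 := by nlinarith
    linarith
  have hwnorm : ‖w‖ < 3 / 2 * s := by
    have h1 : ‖w‖ ≤ ‖w₀‖ + ‖w - w₀‖ := by
      have := norm_add_le w₀ (w - w₀)
      simpa using this
    rw [hw₀] at h1; linarith
  have hwball : dist w 0 < ε := by
    rw [dist_eq_norm, sub_zero]; linarith
  have hw0 : w ≠ 0 := by
    intro hh
    rw [hh] at hww₀
    rw [zero_sub, norm_neg, hw₀] at hww₀
    linarith
  obtain ⟨⟨hg1, hzU, hhz, hzmu⟩, h3est⟩ := hball w (by rwa [mem_ball])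
  set z : ℂ := ψ w with hzdef
  have hzlam : z ≠ c := by
    intro hh
    apply hw0
    rw [← hg1, hh, hgc]
  have hz1 : ‖z‖ < 1 := by
    have e1 : ‖c + h c * w‖ ≤ (1 - t) * ‖c‖ + ‖h c‖ * ‖w - w₀‖ := by
      have : c + h c * w = (c + h c * w₀) + h c * (w - w₀) := by ring
      rw [this, hkey]
      calc ‖(1 - (t:ℂ)) * c + h c * (w - w₀)‖
          ≤ ‖(1 - (t:ℂ)) * c‖ + ‖h c * (w - w₀)‖ := norm_add_le _ _
        _ = (1 - t) * ‖c‖ + ‖h c‖ * ‖w - w₀‖ := by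
            rw [norm_mul, norm_mul]
            congr 1
            rw [show ((1:ℂ) - (t:ℂ)) = ((1 - t : ℝ) : ℂ) by push_cast; ring]
            rw [Complex.norm_real, Real.norm_eq_abs, _root_.abs_of_nonneg (by linarith : (0:ℝ) ≤ 1 - t)]
    have e2 : ‖z - (c + h c * w)‖ ≤ ‖h c‖ / 8 * ‖w‖ := by
      have : z - (c + h c * w) = ψ w - c - w * h c := by rw [hzdef]; ring
      rw [this]; exact h3est
    have e3 : ‖z‖ ≤ ‖c + h c * w‖ + ‖z - (c + h c * w)‖ := by
      have := norm_add_le (c + h c * w) (z - (c + h c * w))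
      simpa using this
    have e4 : ‖h c‖ * ‖w - w₀‖ < t * ‖c‖ / 2 := by
      have := (mul_lt_mul_iff_right₀ hAabs).mpr hww₀
      calc ‖h c‖ * ‖w - w₀‖ < ‖h c‖ * (s / 2) := this
        _ = s * ‖h c‖ / 2 := by ring
        _ = t * ‖c‖ / 2 := by rw [hsA]
    have e5 : ‖h c‖ / 8 * ‖w‖ < 3 / 16 * (t * ‖c‖) := by
      have := mul_lt_mul_of_pos_left hwnorm (by positivity : (0:ℝ) < ‖h c‖ / 8)
      calc ‖h c‖ / 8 * ‖w‖ < ‖h c‖ / 8 * (3 / 2 * s) := this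
        _ = 3 / 16 * (s * ‖h c‖) := by ring
        _ = 3 / 16 * (t * ‖c‖) := by rw [hsA]
    nlinarith [mul_pos ht0 hcabs]
  have hzball : z ∈ Metric.ball (0:ℂ) 1 := by
    rw [mem_ball, dist_eq_norm, sub_zero]; exact hz1
  have hznot : z ∉ ({lam, mu} : Set ℂ) := by
    simp only [Set.mem_insert_iff, Set.mem_singleton_iff]
    push_neg
    exact ⟨hzlam, hzmu⟩
  have hfz : f z = h z / (z - c) := hrep z ⟨⟨hzball, hzU⟩, hznot⟩
  have hzc : z - c ≠ 0 := sub_ne_zero.mpr hzlam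
  have hgz : (z - c) / h z = w := hg1
  have hzcw : z - c = w * h z := by
    rw [← hgz]; field_simp
  refine ⟨z, ⟨hzball, hznot⟩, ?_⟩
  rw [hfz, hzcw]
  rw [hwdef]
  field_simp
end

section
/- Let x ∈ (0,1) and θ ∈ [0, 2π), and set L(x, θ) = {t·e^{iθ} : x ≤ t < 1}. Then there exists a bijective analytic map ω from the open unit disk 𝔻 = {z ∈ ℂ : |z| < 1} onto the slit disk 𝔻 ∖ L(x, θ) such that ω(0) = 0, ω'(0) = −e^{iθ}·4x/(1+x)², and ω(−r) → x·e^{iθ} as r → 1⁻ along the real axis. -/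
set_option maxHeartbeats 1000000

open Complex Metric Set Filter



/-! Auxiliary lemmas for the Koebe-function construction of the slit-disk map. -/

lemma sq_half_cpow {w : ℂ} (hw : w ∈ Complex.slitPlane) : (w ^ (1/2 : ℂ)) ^ 2 = w := by
  have hw0 : w ≠ 0 := Complex.slitPlane_ne_zero hw
  rw [sq, ← Complex.cpow_add _ _ hw0]; norm_num

lemma re_half_cpow_pos {w : ℂ} (hw : w ∈ Complex.slitPlane) : 0 < (w ^ (1/2 : ℂ)).re := by
  have hw0 : w ≠ 0 := Complex.slitPlane_ne_zero hw
  rw [Complex.cpow_def_of_ne_zero hw0, Complex.exp_re]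
  have him : (Complex.log w * (1/2)).im = arg w / 2 := by
    simp [Complex.mul_im, Complex.log_im]; ring
  rw [him]
  have h1 : |arg w / 2| < Real.pi / 2 := by
    have h2 := Complex.arg_mem_Ioc w
    have h3 : arg w ≠ Real.pi := Complex.slitPlane_arg_ne_pi hw
    have := Real.pi_pos
    rw [abs_lt]
    rcases h2 with ⟨hl, hr⟩
    cases lt_or_eq_of_le hr with
    | inl h => constructor <;> linarith
    | inr h => exact absurd h h3
  have hcos : 0 < Real.cos (arg w / 2) := by
    rcases abs_lt.mp h1 with ⟨hl, hr⟩
    exact Real.cos_pos_of_mem_Ioo ⟨hl, hr⟩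
  exact mul_pos (Real.exp_pos _) hcos

/-- Inverse of the Koebe function, mapping `ℂ ∖ (-∞, -1/4]` into the unit disk. -/
noncomputable def Kf (u : ℂ) : ℂ :=
  ((1+4*u) ^ (1/2:ℂ) - 1) / ((1+4*u) ^ (1/2:ℂ) + 1)

lemma Kf_den_ne {u : ℂ} (hu : 1+4*u ∈ Complex.slitPlane) : (1+4*u) ^ (1/2:ℂ) + 1 ≠ 0 := by
  intro h
  have := congrArg Complex.re h
  simp only [Complex.add_re, Complex.one_re, Complex.zero_re] at this
  linarith [re_half_cpow_pos hu]

lemma Kf_abs_lt {u : ℂ} (hu : 1+4*u ∈ Complex.slitPlane) : ‖Kf u‖ < 1 := by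
  set s := (1+4*u) ^ (1/2:ℂ) with hs
  have hre := re_half_cpow_pos hu
  have hlt : ‖s - 1‖ < ‖s + 1‖ := by
    have h2 : (‖s-1‖)^2 < (‖s+1‖)^2 := by
      rw [Complex.sq_norm, Complex.sq_norm, Complex.normSq_apply, Complex.normSq_apply]
      simp only [Complex.sub_re, Complex.sub_im, Complex.add_re, Complex.add_im,
        Complex.one_re, Complex.one_im]
      nlinarith [hre]
    exact lt_of_pow_lt_pow_left₀ 2 (norm_nonneg _) h2
  rw [Kf, norm_div, div_lt_one]
  · exact hlt
  · exact lt_of_le_of_lt (norm_nonneg _) hlt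

lemma k_Kf {u : ℂ} (hu : 1+4*u ∈ Complex.slitPlane) : Kf u / (1 - Kf u)^2 = u := by
  set s := (1+4*u) ^ (1/2:ℂ) with hs
  have hs2 : s^2 = 1+4*u := sq_half_cpow hu
  have hd : s + 1 ≠ 0 := Kf_den_ne hu
  have key : 1 - Kf u = 2/(s+1) := by
    rw [Kf, ← hs, one_sub_div hd]; congr 1; ring
  rw [key, Kf, ← hs]
  have h3 : (s - 1)/(s+1) / (2/(s+1))^2 = (s^2-1)/4 := by
    field_simp; ring
  rw [h3, hs2]
  field_simp
  ring

lemma k_inj {a b : ℂ} (ha : ‖a‖ < 1) (hb : ‖b‖ < 1)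
    (h : a / (1-a)^2 = b / (1-b)^2) : a = b := by
  have ha1 : (1:ℂ) - a ≠ 0 := by
    intro h0; have : a = 1 := by linear_combination -h0
    simp [this] at ha
  have hb1 : (1:ℂ) - b ≠ 0 := by
    intro h0; have : b = 1 := by linear_combination -h0
    simp [this] at hb
  have h' : a * (1-b)^2 = b * (1-a)^2 := by
    field_simp at h; linear_combination h
  have h2 : (a - b) * (1 - a*b) = 0 := by linear_combination h'
  rcases mul_eq_zero.mp h2 with h3 | h3
  · linear_combination h3
  · exfalso
    have hlt : ‖a*b‖ < 1 := by
      rw [norm_mul]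
      calc ‖a‖ * ‖b‖ ≤ ‖a‖ * 1 :=
        mul_le_mul_of_nonneg_left hb.le (norm_nonneg a)
      _ < 1 := by simpa using ha
    have hab : a * b = 1 := by linear_combination -h3
    rw [hab] at hlt; simp at hlt

/-- If `z` is in the unit disk and `c (1-z)² = z` for a real `c`, then `z` is real
and `z = c (1-z)²` as reals. -/
lemma root_real {z : ℂ} (hz : ‖z‖ < 1) {c : ℝ}
    (h' : (c:ℂ) * (1-z) * (1-z) = z) : z.im = 0 ∧ z.re = c*(1-z.re)^2 := by
  have hre := congrArg Complex.re h'
  have him := congrArg Complex.im h'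
  simp only [Complex.mul_re, Complex.mul_im, Complex.sub_re, Complex.sub_im,
    Complex.ofReal_re, Complex.ofReal_im, Complex.one_re, Complex.one_im] at hre him
  set a := z.re with hare
  set b := z.im with haim
  have hre2 : c*((1-a)^2 - b^2) = a := by linear_combination hre
  have him2 : -2*c*(1-a)*b = b := by linear_combination him
  have hnorm : a^2 + b^2 < 1 := by
    have := Complex.sq_norm z
    rw [Complex.normSq_apply] at this
    nlinarith [norm_nonneg z]
  have hb : b = 0 := by
    by_contra hb
    have hE1 : 2*c*(1-a) = -1 := by
      have : b * (2*c*(1-a) + 1) = 0 := by linear_combination -him2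
      rcases mul_eq_zero.mp this with h3 | h3
      · exact absurd h3 hb
      · linarith
    have ha1' : a < 1 := by nlinarith [sq_nonneg b]
    have hc0 : c < 0 := by nlinarith
    have hb2 : 2*c*b^2 = -(1+a) := by linear_combination -2*hre2 + (1-a)*hE1
    have h4 : -2*c*(a^2+b^2) < -2*c := by
      have := mul_lt_mul_of_pos_left hnorm (by linarith : (0:ℝ) < -2*c)
      linarith [this]
    have ha2 : -1 < a := by nlinarith [sq_nonneg b]
    nlinarith [h4, hb2, hE1, mul_pos (by linarith : (0:ℝ) < 1+a) (by linarith : (0:ℝ) < 1-a)]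
  refine ⟨hb, ?_⟩
  rw [hb] at hre2
  linear_combination -hre2

lemma k_no_deep {z : ℂ} (hz : ‖z‖ < 1) {c : ℝ} (hc : c ≤ -(1/4)) :
    z / (1-z)^2 ≠ (c:ℂ) := by
  intro h
  have ha1 : (1:ℂ) - z ≠ 0 := by
    intro h0; have : z = 1 := by linear_combination -h0
    simp [this] at hz
  have h' : (c:ℂ) * (1-z) * (1-z) = z := by
    field_simp at h; linear_combination -h
  obtain ⟨hb, hre2⟩ := root_real hz h'
  have hnorm : z.re^2 < 1 := by
    have h1 := Complex.sq_norm z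
    rw [Complex.normSq_apply, hb] at h1
    nlinarith [norm_nonneg z]
  nlinarith [hre2, sq_nonneg (1+z.re), sq_nonneg (1-z.re),
    mul_nonneg (by linarith : (0:ℝ) ≤ -(c+1/4)) (sq_nonneg (1-z.re))]

lemma slit_mem {ρ : ℝ} (hρ0 : 0 < ρ) (hρ1 : ρ ≤ 1) {z : ℂ} (hz : ‖z‖ < 1) :
    1 + 4*((ρ:ℂ) * (z/(1-z)^2)) ∈ Complex.slitPlane := by
  by_contra hmem
  rw [Complex.mem_slitPlane_iff] at hmem
  push_neg at hmem
  obtain ⟨h1, h2⟩ := hmem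
  set u : ℂ := (ρ:ℂ) * (z/(1-z)^2) with hu
  have him : u.im = 0 := by
    have : (1 + 4*u).im = 4 * u.im := by simp
    rw [h2] at this; linarith
  have hre : u.re ≤ -(1/4) := by
    have : (1 + 4*u).re = 1 + 4 * u.re := by simp
    rw [this] at h1; linarith
  have hueq : u = ((u.re : ℝ) : ℂ) := by
    apply Complex.ext <;> simp [him]
  have hkz : z/(1-z)^2 = ((u.re / ρ : ℝ) : ℂ) := by
    push_cast
    rw [eq_div_iff (by exact_mod_cast hρ0.ne' : (ρ:ℂ) ≠ 0)]
    rw [mul_comm]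
    exact hueq ▸ rfl
  refine k_no_deep hz ?_ hkz
  rw [div_le_iff₀ hρ0]
  nlinarith [hre, hρ1, hρ0]

lemma slit_mem1 {z : ℂ} (hz : ‖z‖ < 1) :
    1 + 4*(z/(1-z)^2) ∈ Complex.slitPlane := by
  have := slit_mem one_pos le_rfl hz
  simpa using this

/-- `Kf` is a left inverse of the Koebe function on the disk. -/
lemma Kf_k {z : ℂ} (hz : ‖z‖ < 1) : Kf (z/(1-z)^2) = z := by
  have hmem := slit_mem1 hz
  have h1 : ‖Kf (z/(1-z)^2)‖ < 1 := Kf_abs_lt hmem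
  have h2 := k_Kf hmem
  exact k_inj h1 hz h2

noncomputable def fm (ρ : ℝ) (z : ℂ) : ℂ := -(Kf ((ρ:ℂ) * (z/(1-z)^2)))

lemma rho_pos {x : ℝ} (hx0 : 0 < x) (hx1 : x < 1) : 0 < 4*x/(1+x)^2 := by positivity

lemma rho_le_one {x : ℝ} (hx0 : 0 < x) (hx1 : x < 1) : 4*x/(1+x)^2 ≤ 1 := by
  rw [div_le_one (by positivity)]
  nlinarith [sq_nonneg (1-x)]

lemma fm_bijOn {x : ℝ} (hx0 : 0 < x) (hx1 : x < 1) :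
    Set.BijOn (fm (4*x/(1+x)^2)) (Metric.ball (0:ℂ) 1)
      (Metric.ball (0:ℂ) 1 \ {w : ℂ | ∃ t : ℝ, x ≤ t ∧ t < 1 ∧ w = (t:ℂ)}) := by
  set ρ : ℝ := 4*x/(1+x)^2 with hρdef
  have hρ0 : 0 < ρ := rho_pos hx0 hx1
  have hρ1 : ρ ≤ 1 := rho_le_one hx0 hx1
  have hρC : (ρ:ℂ) ≠ 0 := by exact_mod_cast hρ0.ne'
  have hball : ∀ w : ℂ, w ∈ Metric.ball (0:ℂ) 1 ↔ ‖w‖ < 1 := by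
    intro w; rw [mem_ball_zero_iff]
  constructor
  · -- MapsTo
    intro z hz
    rw [hball] at hz
    have hmem := slit_mem hρ0 hρ1 hz
    constructor
    · rw [hball, fm, norm_neg]
      exact Kf_abs_lt hmem
    · rintro ⟨t, htx, ht1, hft⟩
      have ht0 : 0 < t := lt_of_lt_of_le hx0 htx
      have hKt : Kf ((ρ:ℂ) * (z/(1-z)^2)) = -(t:ℂ) := by
        rw [fm] at hft; linear_combination -hft
      have hu : (ρ:ℂ) * (z/(1-z)^2) = ((-t/(1+t)^2 : ℝ) : ℂ) := by
        rw [← k_Kf hmem, hKt]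
        push_cast
        have h1t : (1:ℂ) + (t:ℂ) ≠ 0 := by
          intro h; rw [Complex.ext_iff] at h; simp at h; linarith
        field_simp
        rw [sub_neg_eq_add, mul_div_assoc, div_self (pow_ne_zero 2 h1t), mul_one]
      have hkz : z/(1-z)^2 = ((-t/(1+t)^2/ρ : ℝ) : ℂ) := by
        push_cast
        rw [eq_div_iff hρC, mul_comm]
        push_cast at hu
        exact hu
      refine k_no_deep hz ?_ hkz
      rw [div_le_iff₀ hρ0, hρdef]
      have hrw : -(1/4)*(4*x/(1+x)^2) = -x/(1+x)^2 := by ring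
      rw [hrw, div_le_div_iff₀ (by positivity) (by positivity)]
      nlinarith [mul_nonneg (sub_nonneg.mpr htx) (by nlinarith : (0:ℝ) ≤ 1 - x*t),
        sq_nonneg (1+t), sq_nonneg (1+x)]
  refine ⟨?_, ?_⟩
  · -- InjOn
    intro a ha b hb hab
    rw [hball] at ha hb
    have hma := slit_mem hρ0 hρ1 ha
    have hmb := slit_mem hρ0 hρ1 hb
    rw [fm, fm, neg_inj] at hab
    have h1 : (ρ:ℂ) * (a/(1-a)^2) = (ρ:ℂ) * (b/(1-b)^2) := by
      rw [← k_Kf hma, ← k_Kf hmb, hab]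
    have h2 : a/(1-a)^2 = b/(1-b)^2 := mul_left_cancel₀ hρC h1
    exact k_inj ha hb h2
  · -- SurjOn
    intro w hw
    obtain ⟨hwb, hws⟩ := hw
    rw [hball] at hwb
    have hwb' : ‖-w‖ < 1 := by rwa [norm_neg]
    set v : ℂ := (ρ:ℂ)⁻¹ * ((-w)/(1-(-w))^2) with hvdef
    have hv : 1 + 4*v ∈ Complex.slitPlane := by
      by_contra hmem
      rw [Complex.mem_slitPlane_iff] at hmem
      push_neg at hmem
      obtain ⟨h1, h2⟩ := hmem
      have him : v.im = 0 := by
        have h3 : (1 + 4*v).im = 4 * v.im := by simp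
        rw [h2] at h3; linarith
      have hre : v.re ≤ -(1/4) := by
        have h3 : (1 + 4*v).re = 1 + 4 * v.re := by simp
        rw [h3] at h1; linarith
      set d : ℝ := ρ * v.re with hddef
      have hd : d ≤ -(ρ/4) := by
        rw [hddef]; nlinarith
      have h1w : (1:ℂ) - (-w) ≠ 0 := by
        intro h; have : -w = 1 := by linear_combination -h
        rw [this] at hwb'; simp at hwb'
      have hkw : (-w)/(1-(-w))^2 = ((d:ℝ):ℂ) := by
        have hveq : v = ((v.re : ℝ) : ℂ) := by
          apply Complex.ext <;> simp [him]
        have : (-w)/(1-(-w))^2 = (ρ:ℂ) * v := by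
          rw [hvdef, ← mul_assoc, mul_inv_cancel₀ hρC, one_mul]
        rw [this, hveq, hddef]
        push_cast
        ring
      have h1w' : (1:ℂ) + w ≠ 0 := by
        intro h; apply h1w; linear_combination h
      have hroot : ((d:ℝ):ℂ) * (1-(-w)) * (1-(-w)) = -w := by
        rw [← hkw]; field_simp
      obtain ⟨him2, hre2⟩ := root_real hwb' hroot
      set a : ℝ := (-w).re with hadef
      have hnorm : a^2 < 1 := by
        have h1 := Complex.sq_norm (-w)
        rw [Complex.normSq_apply, him2] at h1
        nlinarith [norm_nonneg (-w), hwb']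
      have hax : a ≤ -x := by
        by_contra hax
        push_neg at hax
        have hd' : d ≤ -x/(1+x)^2 := by
          have : -(ρ/4) = -x/(1+x)^2 := by rw [hρdef]; ring
          linarith [this ▸ hd]
        have hkey : d*(1-a)^2 ≤ (-x/(1+x)^2)*(1-a)^2 :=
          mul_le_mul_of_nonneg_right hd' (sq_nonneg _)
        have ha2 : a ≤ -x/(1+x)^2*(1-a)^2 := by linarith [hkey, hre2]
        have ha3 : a*(1+x)^2 ≤ (-x/(1+x)^2*(1-a)^2)*(1+x)^2 :=
          mul_le_mul_of_nonneg_right ha2 (sq_nonneg (1+x))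
        have hR : (-x/(1+x)^2*(1-a)^2)*(1+x)^2 = -x*(1-a)^2 := by
          field_simp
        have h1ax : 0 < 1 + x*a := by nlinarith
        have hprod : 0 < (a+x)*(1+x*a) := mul_pos (by linarith) h1ax
        nlinarith [ha3, hR, hprod]
      have hwt : w = ((-a : ℝ):ℂ) := by
        have hthis : -w = ((a:ℝ):ℂ) := by
          apply Complex.ext
          · rw [hadef]; simp
          · rw [him2]; simp
        push_cast
        linear_combination -hthis
      exact hws ⟨-a, by linarith, by nlinarith, hwt⟩
    -- now construct the preimage
    refine ⟨Kf v, ?_, ?_⟩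
    · rw [hball]; exact Kf_abs_lt hv
    · have hz0 : ‖Kf v‖ < 1 := Kf_abs_lt hv
      rw [fm, k_Kf hv, ← mul_assoc, mul_inv_cancel₀ hρC, one_mul, Kf_k hwb']
      ring

lemma den_ne' {w : ℂ} (hw : w ∈ Complex.slitPlane) : w ^ (1/2:ℂ) + 1 ≠ 0 := by
  intro h
  have := congrArg Complex.re h
  simp only [Complex.add_re, Complex.one_re, Complex.zero_re] at this
  linarith [re_half_cpow_pos hw]

lemma fm_eq (ρ : ℝ) : fm ρ = fun z =>
    -(((1+4*((ρ:ℂ)*(z/(1-z)^2))) ^ (1/2:ℂ) - 1) /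
      ((1+4*((ρ:ℂ)*(z/(1-z)^2))) ^ (1/2:ℂ) + 1)) := rfl

lemma fm_analytic {ρ : ℝ} (hρ0 : 0 < ρ) (hρ1 : ρ ≤ 1) :
    AnalyticOnNhd ℂ (fm ρ) (Metric.ball (0:ℂ) 1) := by
  rw [fm_eq]
  intro z hz
  have hz' : ‖z‖ < 1 := by rwa [mem_ball_zero_iff] at hz
  have hz1 : (1:ℂ) - z ≠ 0 := by
    intro h0; have : z = 1 := by linear_combination -h0
    simp [this] at hz'
  have h1 : AnalyticAt ℂ (fun z : ℂ => 1 + 4*((ρ:ℂ) * (z/(1-z)^2))) z := by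
    apply analyticAt_const.add
    apply analyticAt_const.mul
    apply analyticAt_const.mul
    exact analyticAt_id.div ((analyticAt_const.sub analyticAt_id).pow 2) (pow_ne_zero 2 hz1)
  have hmem := slit_mem hρ0 hρ1 hz'
  have hs : AnalyticAt ℂ (fun z : ℂ => (1 + 4*((ρ:ℂ)*(z/(1-z)^2))) ^ (1/2:ℂ)) z :=
    h1.cpow analyticAt_const hmem
  exact ((hs.sub analyticAt_const).div (hs.add analyticAt_const) (den_ne' hmem)).neg

lemma fm_zero (ρ : ℝ) : fm ρ 0 = 0 := by
  rw [fm_eq]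
  norm_num

lemma fm_hasDeriv {ρ : ℝ} (hρ0 : 0 < ρ) (hρ1 : ρ ≤ 1) :
    HasDerivAt (fm ρ) (-(ρ:ℂ)) 0 := by
  have ha : HasDerivAt (fun z:ℂ => z/(1-z)^2) 1 0 := by
    have hb := ((hasDerivAt_id (0:ℂ)).const_sub 1).pow 2
    have hd := (hasDerivAt_id (0:ℂ)).div hb (by norm_num)
    refine hd.congr_deriv ?_
    norm_num
  have h1 : HasDerivAt (fun z:ℂ => 1 + 4*((ρ:ℂ)*(z/(1-z)^2))) (4*((ρ:ℂ)*1)) 0 :=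
    ((ha.const_mul (ρ:ℂ)).const_mul 4).const_add 1
  have hF10 : (1:ℂ) + 4*((ρ:ℂ)*((0:ℂ)/(1-(0:ℂ))^2)) = 1 := by norm_num
  have hsmem : (1:ℂ) + 4*((ρ:ℂ)*((0:ℂ)/(1-(0:ℂ))^2)) ∈ Complex.slitPlane := by
    rw [hF10]; exact Complex.one_mem_slitPlane
  have hs := h1.cpow_const (c := (1/2:ℂ)) hsmem
  have hnum := hs.sub_const 1
  have hden := hs.add_const 1
  have hne : ((1:ℂ) + 4*((ρ:ℂ)*((0:ℂ)/(1-(0:ℂ))^2))) ^ (1/2:ℂ) + 1 ≠ 0 := by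
    rw [hF10, Complex.one_cpow]; norm_num
  have hdiv := hnum.div hden hne
  rw [fm_eq]
  refine hdiv.neg.congr_deriv ?_
  rw [hF10]
  simp [Complex.one_cpow]
  ring

lemma fm_tendsto {x : ℝ} (hx0 : 0 < x) (hx1 : x < 1) :
    Filter.Tendsto (fun r : ℝ => fm (4*x/(1+x)^2) (-(r:ℂ))) (nhdsWithin 1 (Set.Iio 1))
      (nhds ((x:ℂ))) := by
  set ρ : ℝ := 4*x/(1+x)^2 with hρdef
  have hρ1 : ρ < 1 := by
    rw [hρdef, div_lt_one (by positivity)]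
    nlinarith [sq_nonneg (1-x)]
  have h1ρ : 0 < 1 - ρ := by linarith
  set g : ℝ → ℂ := fun r => 1 + 4*((ρ:ℂ) * ((-(r:ℂ))/(1-(-(r:ℂ)))^2)) with hgdef
  have hgc : ContinuousAt g 1 := by
    apply ContinuousAt.add continuousAt_const
    apply ContinuousAt.mul continuousAt_const
    apply ContinuousAt.mul continuousAt_const
    apply ContinuousAt.div
    · exact (Complex.continuous_ofReal.continuousAt).neg
    · exact (continuousAt_const.sub (Complex.continuous_ofReal.continuousAt).neg).pow 2
    · norm_num
  have hg1 : g 1 = (((1 - ρ : ℝ)):ℂ) := by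
    rw [hgdef]
    push_cast
    have : (1:ℂ) - -1 = 2 := by ring
    norm_num
    ring
  have hmem : ((((1 - ρ : ℝ)):ℂ)) ∈ Complex.slitPlane := Complex.ofReal_mem_slitPlane.2 h1ρ
  set H : ℂ → ℂ := fun w => -((w^(1/2:ℂ)-1)/(w^(1/2:ℂ)+1)) with hHdef
  have hHc : ContinuousAt H (((1 - ρ : ℝ)):ℂ) := by
    have hc : ContinuousAt (fun w : ℂ => w^(1/2:ℂ)) (((1 - ρ : ℝ)):ℂ) :=
      continuousAt_cpow_const hmem
    exact ((hc.sub continuousAt_const).div (hc.add continuousAt_const) (den_ne' hmem)).neg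
  -- compute the value of H at 1 - ρ
  have hb0 : (0:ℝ) ≤ (1-x)/(1+x) := div_nonneg (by linarith) (by linarith)
  have hsq : (1-ρ:ℝ) = ((1-x)/(1+x))^2 := by
    rw [hρdef]; field_simp; ring
  have hsval : (((1 - ρ : ℝ)):ℂ)^(1/2:ℂ) = ((((1-x)/(1+x) : ℝ)):ℂ) := by
    rw [hsq]
    have hhalf : (1/2:ℂ) = ((1/2:ℝ):ℂ) := by norm_num
    rw [hhalf, ← Complex.ofReal_cpow (sq_nonneg _) (1/2)]
    rw [← Real.sqrt_eq_rpow, Real.sqrt_sq hb0]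
  have hHval : H (((1 - ρ : ℝ)):ℂ) = (x:ℂ) := by
    rw [hHdef]
    simp only [hsval]
    have h0 : ((1-x)/(1+x) + 1 : ℝ) ≠ 0 := ne_of_gt (by linarith [hb0])
    have hd : ((((1-x)/(1+x) : ℝ)):ℂ) + 1 ≠ 0 := by
      intro h
      apply h0
      have h2 : ((((1-x)/(1+x) + 1 : ℝ)):ℂ) = 0 := by push_cast at h ⊢; linear_combination h
      exact_mod_cast h2
    have h1x : (1:ℂ) + (x:ℂ) ≠ 0 := by
      intro h
      have h2 : ((1 + x : ℝ):ℂ) = 0 := by push_cast at h ⊢; linear_combination h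
      have h3 : (1 + x : ℝ) = 0 := by exact_mod_cast h2
      linarith
    have hbv : ((((1-x)/(1+x) : ℝ)):ℂ) = (1-(x:ℂ))/(1+(x:ℂ)) := by push_cast; ring
    rw [hbv]
    rw [hbv] at hd
    field_simp
    ring
  have htg : Filter.Tendsto g (nhdsWithin 1 (Set.Iio 1)) (nhds (((1 - ρ : ℝ)):ℂ)) := by
    rw [← hg1]
    exact (hgc.tendsto).mono_left nhdsWithin_le_nhds
  have htot := (hHval ▸ hHc.tendsto).comp htg
  exact htot

/-- Lemma 3.1(i): for `x ∈ (0,1)` and `θ ∈ [0, 2π)`, there is a conformal map `ω` of the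
unit disk onto the slit disk `𝔻 ∖ L(x, θ)`, where `L(x, θ) = {t e^{iθ} : x ≤ t < 1}`,
with `ω(0) = 0`, `ω'(0) = -e^{iθ}·4x/(1+x)²`, and radial limit `ω(-r) → x e^{iθ}` as
`r → 1⁻`. -/
theorem conformal_map_onto_radially_slit_disk
    (x θ : ℝ) (hx : x ∈ Set.Ioo (0:ℝ) 1) (hθ : θ ∈ Set.Ico (0:ℝ) (2 * Real.pi)) :
    ∃ ω : ℂ → ℂ,
      AnalyticOnNhd ℂ ω (Metric.ball (0:ℂ) 1) ∧
      Set.BijOn ω (Metric.ball (0:ℂ) 1)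
        (Metric.ball (0:ℂ) 1 \
          {w : ℂ | ∃ t : ℝ, x ≤ t ∧ t < 1 ∧ w = (t : ℂ) * Complex.exp (θ * Complex.I)}) ∧
      ω 0 = 0 ∧
      deriv ω 0 = -Complex.exp (θ * Complex.I) * (4 * x / (1 + x) ^ 2) ∧
      Filter.Tendsto (fun r : ℝ => ω (-(r : ℂ))) (nhdsWithin 1 (Set.Iio 1))
        (nhds ((x : ℂ) * Complex.exp (θ * Complex.I))) := by
  obtain ⟨hx0, hx1⟩ := hx
  set e : ℂ := Complex.exp (θ * Complex.I) with he
  have he1 : ‖e‖ = 1 := Complex.norm_exp_ofReal_mul_I θ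
  have he0 : e ≠ 0 := by
    intro h; rw [h] at he1; simp at he1
  have hρ0 := rho_pos hx0 hx1
  have hρ1 := rho_le_one hx0 hx1
  refine ⟨fun z => e * fm (4*x/(1+x)^2) z, ?_, ?_, ?_, ?_, ?_⟩
  · intro z hz
    exact analyticAt_const.mul (fm_analytic hρ0 hρ1 z hz)
  · have hb := fm_bijOn hx0 hx1
    refine ⟨?_, ?_, ?_⟩
    · intro z hz
      obtain ⟨h1, h2⟩ := hb.mapsTo hz
      constructor
      · rw [mem_ball_zero_iff] at h1 ⊢
        rw [norm_mul, he1, one_mul]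
        exact h1
      · rintro ⟨t, ht1, ht2, ht3⟩
        refine h2 ⟨t, ht1, ht2, ?_⟩
        have ht3' : e * fm (4*x/(1+x)^2) z = (t:ℂ) * e := ht3
        have : e * fm (4*x/(1+x)^2) z = e * (t:ℂ) := by rw [ht3']; ring
        exact mul_left_cancel₀ he0 this
    · intro a ha b hb' h
      exact hb.injOn ha hb' (mul_left_cancel₀ he0 h)
    · intro w hw
      obtain ⟨hw1, hw2⟩ := hw
      have hw' : e⁻¹ * w ∈ Metric.ball (0:ℂ) 1 \
          {w : ℂ | ∃ t : ℝ, x ≤ t ∧ t < 1 ∧ w = (t:ℂ)} := by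
        constructor
        · rw [mem_ball_zero_iff] at hw1 ⊢
          rw [norm_mul, norm_inv, he1, inv_one, one_mul]
          exact hw1
        · rintro ⟨t, ht1, ht2, ht3⟩
          refine hw2 ⟨t, ht1, ht2, ?_⟩
          have : w = e * (e⁻¹ * w) := by
            rw [← mul_assoc, mul_inv_cancel₀ he0, one_mul]
          rw [this, ht3]; ring
      obtain ⟨z, hz, hfz⟩ := hb.surjOn hw'
      refine ⟨z, hz, ?_⟩
      simp only [hfz]
      rw [← mul_assoc, mul_inv_cancel₀ he0, one_mul]
  · show e * fm (4*x/(1+x)^2) 0 = 0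
    rw [fm_zero]; ring
  · have h := (fm_hasDeriv hρ0 hρ1).const_mul e
    rw [h.deriv]
    push_cast
    ring
  · have h := (fm_tendsto hx0 hx1).const_mul e
    rw [mul_comm ((x:ℂ)) e]
    exact h
end

section
/- Let 0 < p < q < 1 and define ψ(z) = (p + q − 2z)/(2 − (p+q)z), z₁ = (p − q)/(2 − q(p+q)) and z₂ = (q − p)/(2 − p(p+q)). Then ψ is an analytic bijection of the open unit disk 𝔻 = {z ∈ ℂ : |z| < 1} onto itself, the points z₁ and z₂ lie in 𝔻 with z₁ < 0 < z₂, and ψ(z₁) = q, ψ(z₂) = p. -/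
open Complex Metric Set

private lemma den_ne (a : ℝ) (ha0 : 0 ≤ a) (ha2 : a < 2) {z : ℂ}
    (hz : z ∈ Metric.ball (0:ℂ) 1) : (2 - (a:ℂ) * z) ≠ 0 := by
  simp only [Metric.mem_ball, dist_zero_right] at hz
  intro h
  have h2 : (a:ℂ) * z = 2 := by linear_combination -h
  have habs : ‖(a:ℂ) * z‖ < 2 := by
    rw [norm_mul, Complex.norm_real, Real.norm_eq_abs, _root_.abs_of_nonneg ha0]
    nlinarith [norm_nonneg z]
  rw [h2] at habs
  norm_num at habs

private lemma maps_to (a : ℝ) (ha0 : 0 < a) (ha2 : a < 2) :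
    Set.MapsTo (fun z : ℂ => ((a:ℂ) - 2 * z) / (2 - (a:ℂ) * z))
      (Metric.ball (0:ℂ) 1) (Metric.ball (0:ℂ) 1) := by
  intro z hz
  have hden := den_ne a ha0.le ha2 hz
  have hpos : 0 < ‖(2 - (a:ℂ)*z)‖ := norm_pos_iff.mpr hden
  simp only [Metric.mem_ball, dist_zero_right] at hz ⊢
  rw [norm_div, div_lt_one hpos]
  have habs : ‖z‖ ^ 2 = z.re^2 + z.im^2 := by
    rw [Complex.sq_norm, Complex.normSq_apply]; ring
  have hz2 : z.re^2 + z.im^2 < 1 := by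
    rw [← habs]; nlinarith [norm_nonneg z]
  refine lt_of_pow_lt_pow_left₀ 2 (norm_nonneg _) ?_
  rw [Complex.sq_norm, Complex.sq_norm]
  simp [Complex.normSq_apply, Complex.sub_re, Complex.sub_im, Complex.mul_re,
    Complex.mul_im, Complex.ofReal_re, Complex.ofReal_im]
  nlinarith [mul_pos (by nlinarith : (0:ℝ) < 4 - a^2)
    (by nlinarith : (0:ℝ) < 1 - z.re^2 - z.im^2)]

private lemma four_ne (a : ℝ) (ha2 : a < 2) (ha0 : 0 < a) : (4 : ℂ) - (a:ℂ)^2 ≠ 0 := by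
  intro h
  have : ((4 - a^2 : ℝ) : ℂ) = 0 := by push_cast; linear_combination h
  rw [Complex.ofReal_eq_zero] at this
  nlinarith

private lemma invol (a : ℝ) (ha0 : 0 < a) (ha2 : a < 2) {z : ℂ}
    (hz : z ∈ Metric.ball (0:ℂ) 1) :
    ((a:ℂ) - 2 * (((a:ℂ) - 2 * z) / (2 - (a:ℂ) * z))) /
      (2 - (a:ℂ) * (((a:ℂ) - 2 * z) / (2 - (a:ℂ) * z))) = z := by
  have hden := den_ne a ha0.le ha2 hz
  have h4 := four_ne a ha2 ha0
  have hd2 : (2 - (a:ℂ) * (((a:ℂ) - 2 * z) / (2 - (a:ℂ) * z))) =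
      ((4:ℂ) - (a:ℂ)^2) / (2 - (a:ℂ) * z) := by
    rw [eq_div_iff hden]; field_simp; ring
  rw [hd2]
  field_simp
  ring

/-- Case 2 of the proof of Theorem 3.2: for `0 < p < q < 1`, the Möbius map
`ψ(z) = (p + q - 2z)/(2 - (p+q)z)` is an analytic bijection of the unit disk onto itself,
the points `z₁ = (p-q)/(2 - q(p+q))` and `z₂ = (q-p)/(2 - p(p+q))` lie in the disk with
`z₁ < 0 < z₂`, and `ψ(z₁) = q`, `ψ(z₂) = p`. -/
theorem disk_automorphism_swapping_radial_poles
    (p q : ℝ) (hpq : 0 < p ∧ p < q ∧ q < 1) :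
    AnalyticOnNhd ℂ (fun z : ℂ => ((p : ℂ) + q - 2 * z) / (2 - ((p : ℂ) + q) * z))
      (Metric.ball (0:ℂ) 1) ∧
    Set.BijOn (fun z : ℂ => ((p : ℂ) + q - 2 * z) / (2 - ((p : ℂ) + q) * z))
      (Metric.ball (0:ℂ) 1) (Metric.ball (0:ℂ) 1) ∧
    (((p - q) / (2 - q * (p + q)) : ℝ) : ℂ) ∈ Metric.ball (0:ℂ) 1 ∧
    (((q - p) / (2 - p * (p + q)) : ℝ) : ℂ) ∈ Metric.ball (0:ℂ) 1 ∧
    ((p - q) / (2 - q * (p + q)) : ℝ) < 0 ∧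
    (0 : ℝ) < ((q - p) / (2 - p * (p + q)) : ℝ) ∧
    (fun z : ℂ => ((p : ℂ) + q - 2 * z) / (2 - ((p : ℂ) + q) * z))
      ((((p - q) / (2 - q * (p + q)) : ℝ)) : ℂ) = (q : ℂ) ∧
    (fun z : ℂ => ((p : ℂ) + q - 2 * z) / (2 - ((p : ℂ) + q) * z))
      ((((q - p) / (2 - p * (p + q)) : ℝ)) : ℂ) = (p : ℂ) := by
  obtain ⟨hp, hpq', hq⟩ := hpq
  have ha0 : 0 < p + q := by linarith
  have ha2 : p + q < 2 := by linarith
  have hfun : (fun z : ℂ => ((p : ℂ) + q - 2 * z) / (2 - ((p : ℂ) + q) * z)) =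
      (fun z : ℂ => ((((p+q):ℝ):ℂ) - 2 * z) / (2 - (((p+q):ℝ):ℂ) * z)) := by
    funext z; push_cast; ring_nf
  have hd1 : 0 < 2 - q * (p + q) := by nlinarith
  have hd2 : 0 < 2 - p * (p + q) := by nlinarith
  have hz1mem : (((p - q) / (2 - q * (p + q)) : ℝ) : ℂ) ∈ Metric.ball (0:ℂ) 1 := by
    simp only [Metric.mem_ball, dist_zero_right, Complex.norm_real, Real.norm_eq_abs]
    rw [abs_div, abs_of_pos hd1, div_lt_one hd1, abs_lt]
    constructor <;> nlinarith
  have hz2mem : (((q - p) / (2 - p * (p + q)) : ℝ) : ℂ) ∈ Metric.ball (0:ℂ) 1 := by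
    simp only [Metric.mem_ball, dist_zero_right, Complex.norm_real, Real.norm_eq_abs]
    rw [abs_div, abs_of_pos hd2, div_lt_one hd2, abs_lt]
    constructor <;> nlinarith
  refine ⟨?_, ?_, hz1mem, hz2mem, ?_, ?_, ?_, ?_⟩
  · rw [hfun]
    intro z hz
    exact ((analyticAt_const.sub (analyticAt_const.mul (analyticAt_id))).div
      (analyticAt_const.sub (analyticAt_const.mul (analyticAt_id)))
      (den_ne (p+q) ha0.le ha2 hz))
  · rw [hfun]
    exact Set.InvOn.bijOn
      ⟨fun z hz => invol (p+q) ha0 ha2 hz, fun z hz => invol (p+q) ha0 ha2 hz⟩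
      (maps_to (p+q) ha0 ha2) (maps_to (p+q) ha0 ha2)
  · exact div_neg_of_neg_of_pos (by linarith) hd1
  · exact div_pos (by linarith) hd2
  · have hne1 : (2 - ((p:ℂ) + q) * (((p - q) / (2 - q * (p + q)) : ℝ) : ℂ)) ≠ 0 := by
      have h := den_ne (p+q) ha0.le ha2 hz1mem
      push_cast at h ⊢
      convert h using 2
    have hc1 : ((2 - q * (p + q) : ℝ) : ℂ) ≠ 0 := by exact_mod_cast ne_of_gt hd1
    simp only
    rw [div_eq_iff hne1]
    push_cast at hc1 ⊢
    field_simp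
    ring
  · have hne2 : (2 - ((p:ℂ) + q) * (((q - p) / (2 - p * (p + q)) : ℝ) : ℂ)) ≠ 0 := by
      have h := den_ne (p+q) ha0.le ha2 hz2mem
      push_cast at h ⊢
      convert h using 2
    have hc2 : ((2 - p * (p + q) : ℝ) : ℂ) ≠ 0 := by exact_mod_cast ne_of_gt hd2
    simp only
    rw [div_eq_iff hne2]
    push_cast at hc2 ⊢
    field_simp
    ring
end
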